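/- arXiv:0906.2687 — 11 statements merged into one kernel-verified Lean document; each statement's English description precedes it below -/
import Mathlib

section
/- Let A be a finite nonempty set and T a symmetric, irreflexive, saturated relation on A. Then for every Q ∈ 𝒫^T(A), the set Q^T also belongs to 𝒫^T(A), and (Q^T)^T = Q. -/
/-- For `B ⊆ A`, `B^T := {l ∈ A | ∀ l₁ ∈ B, (l₁, l) ∈ T}`. -/
def polar {α : Type*} (T : α → α → Prop) (B : Set α) : Set α :=
  {l | ∀ l₁ ∈ B, T l₁ l}

/-- `𝒫_T(A)`: subsets whose distinct elements are pairwise related by `T`. -/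
def PTset {α : Type*} (T : α → α → Prop) : Set (Set α) :=
  {U | ∀ l ∈ U, ∀ l₁ ∈ U, l₁ ≠ l → T l l₁}

/-- `𝒫^T(A)`: the image of `𝒫_T(A)` under `B ↦ B^T`. -/
def PTup {α : Type*} (T : α → α → Prop) : Set (Set α) :=
  polar T '' PTset T

/-- `T` is symmetric: for all `l ≠ l₁`, `(l, l₁) ∈ T ↔ (l₁, l) ∈ T`. -/
def SymmRel {α : Type*} (T : α → α → Prop) : Prop :=
  ∀ l l₁, l ≠ l₁ → (T l l₁ ↔ T l₁ l)

/-- `T` is irreflexive. -/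
def IrreflRel {α : Type*} (T : α → α → Prop) : Prop :=
  ∀ l, ¬ T l l

/-- `M` is a maximal element of `𝒫_T(A)` with respect to inclusion. -/
def MaxPT {α : Type*} (T : α → α → Prop) (M : Set α) : Prop :=
  M ∈ PTset T ∧ ∀ M' ∈ PTset T, M ⊆ M' → M' = M

/-- `T` is saturated: for every maximal `M ∈ 𝒫_T(A)` and every `B ⊆ M`,
`B^T = ((M \ B)^T)^T`. -/
def SaturatedRel {α : Type*} (T : α → α → Prop) : Prop :=
  ∀ M, MaxPT T M → ∀ B ⊆ M, polar T B = polar T (polar T (M \ B))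

/-!
Extend `U ∈ 𝒫_T(A)` to a maximal `M` (Zorn). Saturation at `B = M \ U` gives
`(U^T)^T = (M \ U)^T`, so `U^T` is again a polar of an element of `𝒫_T(A)`; saturation at
`B = U` then gives `U^T = ((M \ U)^T)^T = ((U^T)^T)^T`.
-/

theorem mem_PTset_iff {α : Type*} {T : α → α → Prop} {U : Set α} :
    U ∈ PTset T ↔ U.Pairwise T :=
  ⟨fun hU _ hl _ hl₁ hne => hU _ hl _ hl₁ hne.symm,
    fun hU _ hl _ hl₁ hne => hU hl hl₁ hne.symm⟩

theorem PTset.mono {α : Type*} {T : α → α → Prop} {U V : Set α} (hV : V ∈ PTset T)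
    (hUV : U ⊆ V) : U ∈ PTset T :=
  mem_PTset_iff.2 ((mem_PTset_iff.1 hV).mono hUV)

-- Zorn's lemma applies since `𝒫_T(A)` is closed under unions of chains.
theorem exists_maxPT_superset {α : Type*} {T : α → α → Prop} {U : Set α}
    (hU : U ∈ PTset T) : ∃ M, U ⊆ M ∧ MaxPT T M := by
  obtain ⟨M, hUM, hM⟩ := zorn_subset_nonempty (PTset T) (fun c hcS hc _ =>
    ⟨⋃₀ c, mem_PTset_iff.2 <| (Set.pairwise_sUnion hc.directedOn).2
        fun V hV => mem_PTset_iff.1 (hcS hV),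
      fun _ => Set.subset_sUnion_of_mem⟩) U hU
  exact ⟨M, hUM, hM.1, fun M' hM' hMM' => (hM.2 hM' hMM').antisymm hMM'⟩

theorem polar_polar_eq_polar_diff {α : Type*} {T : α → α → Prop} (hsat : SaturatedRel T)
    {M U : Set α} (hM : MaxPT T M) (hUM : U ⊆ M) :
    polar T (polar T U) = polar T (M \ U) := by
  have h := hsat M hM (M \ U) Set.sdiff_subset
  rwa [Set.sdiff_sdiff_cancel_left hUM, eq_comm] at h

theorem stmt1_general {α : Type*} (T : α → α → Prop) (hsat : SaturatedRel T) :
    ∀ Q ∈ PTup T, polar T Q ∈ PTup T ∧ polar T (polar T Q) = Q := by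
  rintro Q ⟨U, hU, rfl⟩
  obtain ⟨M, hUM, hM⟩ := exists_maxPT_superset hU
  have key := polar_polar_eq_polar_diff hsat hM hUM
  exact ⟨⟨M \ U, PTset.mono hM.1 Set.sdiff_subset, key.symm⟩, by rw [key, ← hsat M hM U hUM]⟩

theorem stmt1 {α : Type*} [Fintype α] [Nonempty α] (T : α → α → Prop)
    (hsymm : SymmRel T) (hirr : IrreflRel T) (hsat : SaturatedRel T) :
    ∀ Q ∈ PTup T, polar T Q ∈ PTup T ∧ polar T (polar T Q) = Q :=
  stmt1_general T hsat
end

section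
/- Let A be a finite nonempty set and T a symmetric, irreflexive, saturated relation on A. If Q, Q₁, Q₂ ∈ 𝒫^T(A) satisfy Q₁ ⊆ Q^T and Q₂ ⊆ (((Q ∪ Q₁)^T)^T)^T, then Q₂ ⊆ Q₁^T, Q ⊆ (((Q₁ ∪ Q₂)^T)^T)^T, and ((((Q ∪ Q₁)^T)^T ∪ Q₂)^T)^T = ((Q ∪ Q₁ ∪ Q₂)^T)^T = ((Q ∪ ((Q₁ ∪ Q₂)^T)^T)^T)^T; i.e. the partial operation Q ⊕ Q₁ := ((Q ∪ Q₁)^T)^T on 𝒫^T(A) is associative. -/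
/-!
`polar T` is Mathlib's `upperPolar T`, and a symmetric `T` makes it coincide with `lowerPolar T`,
so `B ↦ B^T` is an antitone Galois connection with itself. Hence `B^{TTT} = B^T`, and since
`(B ∪ C)^T = B^T ∩ C^T`, replacing part of a union by its closure `^{TT}` does not change the
polar of the union: this is the associativity. The orthogonality claims come from
`B ⊆ C^T ↔ C ⊆ B^T`.
-/

section Polar

variable {α : Type*} {T : α → α → Prop}

theorem polar_eq_upperPolar : polar T = upperPolar T := rfl

theorem polar_union (B C : Set α) : polar T (B ∪ C) = polar T B ∩ polar T C :=
  upperPolar_union T B C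

end Polar

namespace SymmRel

variable {α : Type*} {T : α → α → Prop}

theorem rel_symm (hsymm : SymmRel T) {a b : α} (h : T a b) : T b a := by
  by_cases hab : a = b
  · exact hab ▸ h
  · exact (hsymm a b hab).mp h

theorem lowerPolar_eq_polar (hsymm : SymmRel T) (B : Set α) : lowerPolar T B = polar T B :=
  Set.ext fun _ => ⟨fun h _ hb => hsymm.rel_symm (h hb), fun h _ hb => hsymm.rel_symm (h _ hb)⟩

theorem subset_polar_comm (hsymm : SymmRel T) {B C : Set α} :
    B ⊆ polar T C ↔ C ⊆ polar T B := by
  rw [← hsymm.lowerPolar_eq_polar B, polar_eq_upperPolar]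
  exact subset_upperPolar_iff_subset_lowerPolar

theorem polar_polar_polar (hsymm : SymmRel T) (B : Set α) :
    polar T (polar T (polar T B)) = polar T B := by
  rw [← hsymm.lowerPolar_eq_polar (polar T B), polar_eq_upperPolar]
  exact upperPolar_lowerPolar_upperPolar T B

theorem polar_union_polar_polar_left (hsymm : SymmRel T) (B C : Set α) :
    polar T (polar T (polar T B) ∪ C) = polar T (B ∪ C) := by
  rw [polar_union, hsymm.polar_polar_polar, polar_union]

theorem polar_union_polar_polar_right (hsymm : SymmRel T) (B C : Set α) :
    polar T (B ∪ polar T (polar T C)) = polar T (B ∪ C) := by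
  rw [polar_union, hsymm.polar_polar_polar, polar_union]

end SymmRel

theorem stmt3_general {α : Type*} (T : α → α → Prop)
    (hsymm : SymmRel T) :
    ∀ Q ∈ PTup T, ∀ Q₁ ∈ PTup T, ∀ Q₂ ∈ PTup T,
      Q₁ ⊆ polar T Q → Q₂ ⊆ polar T (polar T (polar T (Q ∪ Q₁))) →
      Q₂ ⊆ polar T Q₁ ∧
      Q ⊆ polar T (polar T (polar T (Q₁ ∪ Q₂))) ∧
      polar T (polar T (polar T (polar T (Q ∪ Q₁)) ∪ Q₂)) =
        polar T (polar T (Q ∪ Q₁ ∪ Q₂)) ∧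
      polar T (polar T (Q ∪ Q₁ ∪ Q₂)) =
        polar T (polar T (Q ∪ polar T (polar T (Q₁ ∪ Q₂)))) := by
  intro Q _ Q₁ _ Q₂ _ hQ₁ hQ₂
  rw [hsymm.polar_polar_polar, polar_union] at hQ₂
  refine ⟨hQ₂.trans Set.inter_subset_right, ?_, ?_, ?_⟩
  · rw [hsymm.polar_polar_polar, polar_union]
    exact Set.subset_inter (hsymm.subset_polar_comm.mp hQ₁)
      (hsymm.subset_polar_comm.mp (hQ₂.trans Set.inter_subset_left))
  · rw [hsymm.polar_union_polar_polar_left]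
  · rw [hsymm.polar_union_polar_polar_right, Set.union_assoc]

theorem stmt3 {α : Type*} [Fintype α] [Nonempty α] (T : α → α → Prop)
    (hsymm : SymmRel T) (hirr : IrreflRel T) (hsat : SaturatedRel T) :
    ∀ Q ∈ PTup T, ∀ Q₁ ∈ PTup T, ∀ Q₂ ∈ PTup T,
      Q₁ ⊆ polar T Q → Q₂ ⊆ polar T (polar T (polar T (Q ∪ Q₁))) →
      Q₂ ⊆ polar T Q₁ ∧
      Q ⊆ polar T (polar T (polar T (Q₁ ∪ Q₂))) ∧
      polar T (polar T (polar T (polar T (Q ∪ Q₁)) ∪ Q₂)) =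
        polar T (polar T (Q ∪ Q₁ ∪ Q₂)) ∧
      polar T (polar T (Q ∪ Q₁ ∪ Q₂)) =
        polar T (polar T (Q ∪ polar T (polar T (Q₁ ∪ Q₂)))) :=
  stmt3_general T hsymm
end

section
/- Let A be a finite nonempty set and T a symmetric, irreflexive, saturated relation on A. Then for every Q ∈ 𝒫^T(A), one has Q ⊆ (Q^T)^T (so Q ⊕ Q^T is defined), (Q ∪ Q^T)^T = ∅, and ((Q ∪ Q^T)^T)^T = A; i.e. Q^T is a complement of Q with respect to the partial operation Q ⊕ Q₁ := ((Q ∪ Q₁)^T)^T with unit A. -/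
section Polar

variable {α : Type*} {T : α → α → Prop}

theorem SymmRel.symm_of_irreflRel (hsymm : SymmRel T) (hirr : IrreflRel T) :
    Std.Symm T := by
  refine ⟨fun a b hab => ?_⟩
  have hne : a ≠ b := by
    rintro rfl
    exact hirr a hab
  exact (hsymm a b hne).mp hab

@[simp]
theorem polar_empty : polar T ∅ = Set.univ :=
  Set.eq_univ_of_forall fun _ _ h => absurd h (Set.notMem_empty _)

theorem subset_polar_polar [Std.Symm T] (B : Set α) : B ⊆ polar T (polar T B) :=
  fun _ hb _ hm => Std.Symm.symm _ _ (hm _ hb)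

/-- A point of `(B ∪ B^T)^T` lies in `B^T`, so it would be `T`-related to itself. -/
theorem polar_union_polar_eq_empty (hirr : IrreflRel T) (B : Set α) :
    polar T (B ∪ polar T B) = ∅ :=
  Set.eq_empty_of_forall_notMem fun x hx =>
    hirr x (hx x (Or.inr fun l hl => hx l (Or.inl hl)))

end Polar

theorem stmt5_general {α : Type*} (T : α → α → Prop)
    (hsymm : SymmRel T) (hirr : IrreflRel T) :
    ∀ Q ∈ PTup T,
      Q ⊆ polar T (polar T Q) ∧
      polar T (Q ∪ polar T Q) = ∅ ∧
      polar T (polar T (Q ∪ polar T Q)) = Set.univ := by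
  intro Q _
  have := hsymm.symm_of_irreflRel hirr
  have hQ := polar_union_polar_eq_empty hirr Q
  exact ⟨subset_polar_polar Q, hQ, by rw [hQ, polar_empty]⟩

theorem stmt5 {α : Type*} [Fintype α] [Nonempty α] (T : α → α → Prop)
    (hsymm : SymmRel T) (hirr : IrreflRel T) (hsat : SaturatedRel T) :
    ∀ Q ∈ PTup T,
      Q ⊆ polar T (polar T Q) ∧
      polar T (Q ∪ polar T Q) = ∅ ∧
      polar T (polar T (Q ∪ polar T Q)) = Set.univ :=
  stmt5_general T hsymm hirr
end

section
/- Let V be a finite set. For S ⊆ V define the map T̂_S on functions φ : V → ZMod 2 by T̂_S(φ) := φ + (∑_{s ∈ S} φ(s)) · 𝟙_{V∖S}, where 𝟙_{V∖S} is the indicator function of the complement of S. Then each T̂_S is a (ZMod 2)-linear involutive automorphism of the vector space of functions V → ZMod 2, and every (ZMod 2)-linear automorphism of this vector space is a finite composition of the maps T̂_S, S ⊆ V; i.e. the maps T̂_S generate the whole general linear group GL(|V|, 𝔽₂). -/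
/-- `T̂_S(φ) := φ + (∑_{s ∈ S} φ s) · 𝟙_{V ∖ S}`, where `𝟙_{V ∖ S}` is the indicator
function of the complement of `S`. -/
def hatT {V : Type*} [Fintype V] [DecidableEq V] (S : Finset V)
    (φ : V → ZMod 2) : V → ZMod 2 :=
  fun v => φ v + (∑ s ∈ S, φ s) * (if v ∈ S then 0 else 1)

/-!
Over `ZMod 2` every invertible matrix is a product of elementary transvections
`φ ↦ φ + c • φ j • 𝟙_{i}` (Gaussian elimination; the diagonal factor is trivial because
the only unit of `ZMod 2` is `1`), and the transvection with `c = 1` is the word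
`T̂_{i,j} ∘ T̂_{j} ∘ T̂_{i,j}`.
-/

open Matrix

section

variable {V : Type*} [Fintype V] [DecidableEq V]

lemma hatT_apply_of_mem {S : Finset V} {v : V} (hv : v ∈ S) (φ : V → ZMod 2) :
    hatT S φ v = φ v := by
  simp [hatT, hv]

lemma hatT_apply_of_notMem {S : Finset V} {v : V} (hv : v ∉ S) (φ : V → ZMod 2) :
    hatT S φ v = φ v + ∑ s ∈ S, φ s := by
  simp [hatT, hv]

lemma hatT_isLinearMap (S : Finset V) : IsLinearMap (ZMod 2) (hatT S) where
  map_add φ ψ := funext fun v => by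
    simp only [hatT, Pi.add_apply, Finset.sum_add_distrib]
    ring
  map_smul c φ := funext fun v => by
    simp only [hatT, Pi.smul_apply, smul_eq_mul, ← Finset.mul_sum]
    ring

lemma hatT_involutive (S : Finset V) : Function.Involutive (hatT S) := by
  intro φ
  have hsum : ∑ s ∈ S, hatT S φ s = ∑ s ∈ S, φ s :=
    Finset.sum_congr rfl fun s hs => hatT_apply_of_mem hs φ
  funext v
  by_cases hv : v ∈ S
  · simp only [hatT_apply_of_mem hv]
  · rw [hatT_apply_of_notMem hv, hsum, hatT_apply_of_notMem hv, add_assoc,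
      CharTwo.add_self_eq_zero, add_zero]

lemma hatT_pair_comp_singleton_comp_pair {i j : V} (hij : i ≠ j) (φ : V → ZMod 2) :
    hatT {i, j} (hatT {j} (hatT {i, j} φ)) = φ + Pi.single i (φ j) := by
  funext v
  simp only [hatT, Finset.sum_pair hij, Finset.sum_singleton, Pi.add_apply, Pi.single_apply]
  grind

lemma transvection_mulVec {R : Type*} [CommRing R] (i j : V) (c : R) (φ : V → R) :
    transvection i j c *ᵥ φ = φ + Pi.single i (c * φ j) := by
  rw [transvection, add_mulVec, one_mulVec, single_mulVec]
  rfl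

lemma zmod_two_eq_zero_or_eq_one (c : ZMod 2) : c = 0 ∨ c = 1 := by
  revert c; decide

def IsHatTWord (f : (V → ZMod 2) → V → ZMod 2) : Prop :=
  ∃ L : List (Finset V), f = L.foldr (fun S g => hatT S ∘ g) id

lemma foldr_hatT_eq_comp (L : List (Finset V)) (g : (V → ZMod 2) → V → ZMod 2) :
    L.foldr (fun S g => hatT S ∘ g) g = L.foldr (fun S g => hatT S ∘ g) id ∘ g := by
  induction L with
  | nil => rfl
  | cons S L ih => simp only [List.foldr_cons, ih]; rfl

lemma isHatTWord_id : IsHatTWord (id : (V → ZMod 2) → V → ZMod 2) := ⟨[], rfl⟩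

lemma IsHatTWord.comp {f g : (V → ZMod 2) → V → ZMod 2} (hf : IsHatTWord f)
    (hg : IsHatTWord g) : IsHatTWord (f ∘ g) := by
  obtain ⟨L, rfl⟩ := hf
  obtain ⟨L', rfl⟩ := hg
  exact ⟨L ++ L', by rw [List.foldr_append, foldr_hatT_eq_comp L (L'.foldr _ id)]⟩

lemma isHatTWord_transvection_mulVec (i j : V) (hij : i ≠ j) (c : ZMod 2) :
    IsHatTWord (transvection i j c *ᵥ ·) := by
  rcases zmod_two_eq_zero_or_eq_one c with rfl | rfl
  · simp only [transvection_zero, one_mulVec]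
    exact isHatTWord_id
  · refine ⟨[{i, j}, {j}, {i, j}], funext fun φ => ?_⟩
    simp [transvection_mulVec, hatT_pair_comp_singleton_comp_pair hij]

lemma diagonal_eq_one_of_det_ne_zero {D : V → ZMod 2} (hD : (diagonal D).det ≠ 0) :
    diagonal D = 1 := by
  rw [← diagonal_one]
  congr 1
  funext v
  refine (zmod_two_eq_zero_or_eq_one (D v)).resolve_left fun h => hD ?_
  rw [det_diagonal]
  exact Finset.prod_eq_zero (Finset.mem_univ v) h

lemma isHatTWord_mulVec_of_det_ne_zero (M : Matrix V V (ZMod 2)) (hM : M.det ≠ 0) :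
    IsHatTWord (M *ᵥ ·) := by
  refine diagonal_transvection_induction_of_det_ne_zero (fun A => IsHatTWord (A *ᵥ ·)) M hM
    (fun D hD => ?_) (fun t => isHatTWord_transvection_mulVec t.i t.j t.hij t.c)
    (fun A B _ _ hA hB => ?_)
  · simp only [diagonal_eq_one_of_det_ne_zero hD, one_mulVec]
    exact isHatTWord_id
  · convert hA.comp hB using 1
    funext φ
    simp [mulVec_mulVec]

end

theorem stmt9 {V : Type*} [Fintype V] [DecidableEq V] :
    (∀ S : Finset V,
      IsLinearMap (ZMod 2) (hatT S) ∧ hatT S ∘ hatT S = id ∧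
        Function.Bijective (hatT S)) ∧
    (∀ e : (V → ZMod 2) ≃ₗ[ZMod 2] (V → ZMod 2),
      ∃ L : List (Finset V), ⇑e = L.foldr (fun S g => hatT S ∘ g) id) := by
  refine ⟨fun S => ⟨hatT_isLinearMap S, (hatT_involutive S).comp_self,
    (hatT_involutive S).bijective⟩, fun e => ?_⟩
  have hdet : (LinearMap.toMatrix' (e : (V → ZMod 2) →ₗ[ZMod 2] V → ZMod 2)).det ≠ 0 := by
    rw [LinearMap.det_toMatrix']
    exact e.isUnit_det'.ne_zero
  obtain ⟨L, hL⟩ := isHatTWord_mulVec_of_det_ne_zero _ hdet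
  refine ⟨L, hL ▸ funext fun φ => ?_⟩
  simp only [LinearMap.toMatrix'_mulVec, LinearEquiv.coe_coe]
end

section
/- Let V be a finite set and for S ⊆ V define T_S : 𝒫(V) → 𝒫(V) by T_S(U) := U if |U ∩ S| is even, and T_S(U) := V ∖ (U Δ S) if |U ∩ S| is odd (Δ denotes symmetric difference). Then for all S, U, U₁ ⊆ V: (i) S ∩ T_S(U) = S ∩ U; (ii) T_S(T_S(U)) = U, i.e. T_S is an involution; (iii) T_S(U Δ U₁) = T_S(U) Δ T_S(U₁). -/
/-!
Writing `χ(U) ∈ 𝔽₂` for the parity of `|U ∩ S|`, `T_S(U) = U Δ χ(U)·Sᶜ` (`parityShift`), because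
`(U Δ S)ᶜ = U Δ Sᶜ`. Over `𝔽₂` this is the identity plus a rank-one map: `χ` is additive for `Δ`,
since `|A Δ B| ≡ |A| + |B| (mod 2)`, hence so is `T_S`. As `Sᶜ` misses `S`, adding a multiple of
`Sᶜ` changes neither `S ∩ U` nor `χ(U)`, which gives (i) and then (ii).
-/

open scoped symmDiff

/-- `T_S(U) := U` if `|U ∩ S|` is even, and `T_S(U) := V ∖ (U Δ S)` if `|U ∩ S|` is odd. -/
def TSmap {V : Type*} [Fintype V] [DecidableEq V] (S U : Finset V) : Finset V :=
  if Even (U ∩ S).card then U else (U ∆ S)ᶜ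

open Finset

namespace Finset

variable {α : Type*} [DecidableEq α]

theorem card_symmDiff_add_two_mul_card_inter (A B : Finset α) :
    #(A ∆ B) + 2 * #(A ∩ B) = #A + #B := by
  rw [symmDiff_eq_sup_sdiff_inf, sup_eq_union, inf_eq_inter,
    card_sdiff_of_subset inter_subset_union, ← card_union_add_card_inter]
  have := card_le_card (inter_subset_union (s := A) (t := B))
  omega

theorem even_card_symmDiff_iff (A B : Finset α) :
    Even #(A ∆ B) ↔ (Even #A ↔ Even #B) := by
  rw [← Nat.even_add, ← card_symmDiff_add_two_mul_card_inter, Nat.even_add]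
  simp

end Finset

section

variable {V : Type*} [Fintype V] [DecidableEq V]

def parityShift (S U : Finset V) : Finset V :=
  if Even #(U ∩ S) then ∅ else Sᶜ

theorem TSmap_eq_symmDiff_parityShift (S U : Finset V) :
    TSmap S U = U ∆ parityShift S U := by
  unfold TSmap parityShift
  split_ifs
  · exact (symmDiff_bot U).symm
  · ext x
    simp only [mem_compl, mem_symmDiff]
    tauto

theorem inter_parityShift (S U : Finset V) : S ∩ parityShift S U = ∅ := by
  unfold parityShift
  split_ifs
  · exact inter_empty S
  · exact inter_compl S

theorem parityShift_symmDiff (S U U₁ : Finset V) :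
    parityShift S (U ∆ U₁) = parityShift S U ∆ parityShift S U₁ := by
  have hparity := even_card_symmDiff_iff (U ∩ S) (U₁ ∩ S)
  rw [← show (U ∆ U₁) ∩ S = (U ∩ S) ∆ (U₁ ∩ S) from inf_symmDiff_distrib_right U U₁ S] at hparity
  unfold parityShift
  by_cases hU : Even #(U ∩ S) <;> by_cases hU₁ : Even #(U₁ ∩ S) <;>
    simp [hparity, hU, hU₁, ← bot_eq_empty]

theorem inter_TSmap (S U : Finset V) : S ∩ TSmap S U = S ∩ U := by
  rw [TSmap_eq_symmDiff_parityShift,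
    show S ∩ U ∆ parityShift S U = (S ∩ U) ∆ (S ∩ parityShift S U) from
      inf_symmDiff_distrib_left S U _,
    inter_parityShift, ← bot_eq_empty, symmDiff_bot]

theorem parityShift_TSmap (S U : Finset V) : parityShift S (TSmap S U) = parityShift S U := by
  unfold parityShift
  rw [inter_comm, inter_TSmap, inter_comm]

end

theorem stmt10 {V : Type*} [Fintype V] [DecidableEq V] :
    ∀ S U U₁ : Finset V,
      S ∩ TSmap S U = S ∩ U ∧
      TSmap S (TSmap S U) = U ∧
      TSmap S (U ∆ U₁) = TSmap S U ∆ TSmap S U₁ := by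
  intro S U U₁
  refine ⟨inter_TSmap S U, ?_, ?_⟩
  · rw [TSmap_eq_symmDiff_parityShift S (TSmap S U), parityShift_TSmap,
      TSmap_eq_symmDiff_parityShift, symmDiff_symmDiff_cancel_right]
  · simp only [TSmap_eq_symmDiff_parityShift, parityShift_symmDiff,
      symmDiff_symmDiff_symmDiff_comm]
end

section
/- Let V be a finite set. For S ⊆ V define θ_S on functions φ : V → ZMod 2 by θ_S(φ)(v) := φ(v) if v ∉ S and θ_S(φ)(v) := φ(v) + ∑_{w ∈ V∖S} φ(w) if v ∈ S. Then θ_S ∘ θ_S = id, and for every U ⊆ V and every φ : V → ZMod 2 one has ∑_{v ∈ T_S(U)} θ_S(φ)(v) = ∑_{v ∈ U} φ(v), where T_S(U) := U if |U ∩ S| is even and T_S(U) := V ∖ (U Δ S) if |U ∩ S| is odd. In particular, if ∑_{v ∈ U} φ(v) = 0 then ∑_{v ∈ T_S(U)} θ_S(φ)(v) = 0. -/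
open scoped symmDiff

open Finset

/-- `θ_S(φ)(v) := φ(v)` if `v ∉ S` and `θ_S(φ)(v) := φ(v) + ∑_{w ∈ V ∖ S} φ(w)` if `v ∈ S`. -/
def thetaS {V : Type*} [Fintype V] [DecidableEq V] (S : Finset V)
    (φ : V → ZMod 2) : V → ZMod 2 :=
  fun v => if v ∈ S then φ v + ∑ w ∈ Sᶜ, φ w else φ v

/-! `θ_S` adds the constant `c = ∑_{V∖S} φ` on `S` and fixes `φ` off `S`, so a sum of `θ_S φ`
over `T` picks up `|T ∩ S| · c`. In particular `c` is itself unchanged, which makes `θ_S` an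
involution. For odd `|U ∩ S|` the set `T_S(U)` still meets `S` in `U ∩ S`, and modulo 2 the sums
over `V ∖ (U Δ S)` and `V ∖ S` add up to the sum over `U`. -/

namespace CharTwo

variable {α R : Type*} [Ring R] [CharP R 2]

theorem sum_symmDiff [DecidableEq α] (s t : Finset α) (f : α → R) :
    ∑ x ∈ s ∆ t, f x = ∑ x ∈ s, f x + ∑ x ∈ t, f x := by
  have hsdiff := sum_sdiff (f := f) (inter_subset_union (s := s) (t := t))
  rw [symmDiff_eq_sup_sdiff_inf, ← sum_union_inter, ← hsdiff, add_assoc, add_self_eq_zero,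
    add_zero]
  rfl

theorem sum_compl [Fintype α] [DecidableEq α] (s : Finset α) (f : α → R) :
    ∑ x ∈ sᶜ, f x = ∑ x, f x + ∑ x ∈ s, f x := by
  rw [← sub_eq_add, eq_sub_iff_add_eq, sum_compl_add_sum]

end CharTwo

section Theta

variable {V : Type*} [Fintype V] [DecidableEq V]

theorem sum_thetaS (S T : Finset V) (φ : V → ZMod 2) :
    ∑ v ∈ T, thetaS S φ v = ∑ v ∈ T, φ v + #(T ∩ S) * ∑ w ∈ Sᶜ, φ w := by
  have hpoint v : thetaS S φ v = φ v + if v ∈ S then ∑ w ∈ Sᶜ, φ w else 0 := by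
    unfold thetaS; split_ifs <;> simp
  simp only [hpoint, sum_add_distrib, sum_ite_mem, sum_const, nsmul_eq_mul]

theorem sum_compl_thetaS (S : Finset V) (φ : V → ZMod 2) :
    ∑ w ∈ Sᶜ, thetaS S φ w = ∑ w ∈ Sᶜ, φ w := by
  rw [sum_thetaS, disjoint_iff_inter_eq_empty.1 disjoint_compl_left, card_empty, Nat.cast_zero,
    zero_mul, add_zero]

theorem thetaS_involutive (S : Finset V) : Function.Involutive (thetaS S) := by
  intro φ
  funext v
  by_cases hv : v ∈ S
  · have hc := sum_compl_thetaS S φ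
    simp only [thetaS, hv, if_true] at hc ⊢
    rw [hc, add_assoc, CharTwo.add_self_eq_zero, add_zero]
  · simp only [thetaS, hv, if_false]

theorem sum_TSmap_thetaS (S U : Finset V) (φ : V → ZMod 2) :
    ∑ v ∈ TSmap S U, thetaS S φ v = ∑ v ∈ U, φ v := by
  unfold TSmap
  split_ifs with h
  · rw [sum_thetaS, ZMod.natCast_eq_zero_iff_even.2 h, zero_mul, add_zero]
  · have hinter : (U ∆ S)ᶜ ∩ S = U ∩ S := by
      ext; simp only [mem_compl, mem_symmDiff, mem_inter]; tauto
    rw [sum_thetaS, hinter, ZMod.natCast_eq_one_iff_odd.2 (Nat.not_even_iff_odd.1 h), one_mul,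
      CharTwo.sum_compl, CharTwo.sum_compl, CharTwo.sum_symmDiff]
    linear_combination (∑ v, φ v + ∑ v ∈ S, φ v) * CharTwo.two_eq_zero (R := ZMod 2)

end Theta

theorem stmt11 {V : Type*} [Fintype V] [DecidableEq V] :
    ∀ S : Finset V,
      thetaS S ∘ thetaS S = id ∧
      ∀ (U : Finset V) (φ : V → ZMod 2),
        (∑ v ∈ TSmap S U, thetaS S φ v = ∑ v ∈ U, φ v) ∧
        (∑ v ∈ U, φ v = 0 → ∑ v ∈ TSmap S U, thetaS S φ v = 0) := fun S =>
  ⟨(thetaS_involutive S).comp_self, fun U φ =>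
    ⟨sum_TSmap_thetaS S U φ, fun h => (sum_TSmap_thetaS S U φ).trans h⟩⟩
end

section
/- Let V be a finite set with N := |V| divisible by 4, and let b, c : ZMod 4 → ZMod 2 satisfy c(0) + c(2) = b(0) + b(2) and c(1) + c(3) = b(1) + b(3). Then for every S ⊆ V there exists a bijection θ̂_S : A_b → A_b such that: (i) θ̂_S maps the fiber {(U, φ) : φ ∈ L_b(U)} onto the fiber {(T_S(U), ψ) : ψ ∈ L_b(T_S(U))} for every U ⊆ V, where T_S(U) := U if |U ∩ S| is even and T_S(U) := V ∖ (U Δ S) if |U ∩ S| is odd; and (ii) for all l, l₁ ∈ A_b, (l, l₁) ∈ T_c if and only if (θ̂_S(l), θ̂_S(l₁)) ∈ T_c. -/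
open scoped symmDiff

/-- `L_b(U) := {φ : V → ZMod 2 | ∑_{z ∈ U} φ z = b(|U| mod 4)}`. -/
def Lb {V : Type*} [DecidableEq V] (b : ZMod 4 → ZMod 2) (U : Finset V) :
    Set (V → ZMod 2) :=
  {φ | ∑ z ∈ U, φ z = b (U.card : ZMod 4)}

/-- `A_b`: the disjoint union over `U ⊆ V` of the sets `L_b(U)`,
realized as the set of pairs `(U, φ)` with `φ ∈ L_b(U)`. -/
def AbGround (V : Type*) [DecidableEq V] (b : ZMod 4 → ZMod 2) : Type _ :=
  {p : Finset V × (V → ZMod 2) // p.2 ∈ Lb b p.1}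

/-- The relation `T_c` on pairs `(U, φ)`: for equal first components it is `φ ≠ φ'`,
and for `U ≠ U₁` it is `∑_{z ∈ U Δ U₁} (φ z + φ₁ z) ≠ c(|U Δ U₁| mod 4)`. -/
def TcP {V : Type*} [DecidableEq V] (c : ZMod 4 → ZMod 2)
    (p q : Finset V × (V → ZMod 2)) : Prop :=
  if p.1 = q.1 then p.2 ≠ q.2
  else ∑ z ∈ p.1 ∆ q.1, (p.2 z + q.2 z) ≠ c (((p.1 ∆ q.1).card : ZMod 4))

/-- The relation `T_c` on `A_b`. -/
def Tc {V : Type*} [DecidableEq V] (b : ZMod 4 → ZMod 2) (c : ZMod 4 → ZMod 2)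
    (l l₁ : AbGround V b) : Prop :=
  TcP c l.1 l₁.1

/-!
`θ̂_S` sends `(U, φ)` to `(T_S(U), ψ)` with `ψ = φ + ε • 1_S + τ_U`, where the scalar
`ε = ∑_{Sᶜ} φ + ρ(U)` depends on `φ` only through its sum off `S`, and `τ_U = λ • (1_U + |U|)`
with `λ = (∑ b) |S|` when `|U ∩ S|` is odd, `τ_U = 0` otherwise. Since `T_S` is an involution and
`φ` is recovered from `ψ` off `S`, this map is injective, hence bijective on the finite set `A_b`.

For `U ≠ U₁` the relation `T_c` only sees the defect `∑_{U Δ U₁} (φ + φ₁) + c(|U Δ U₁|)` in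
`ZMod 2`, which the map preserves. If `|U ∩ S|` and `|U₁ ∩ S|` have equal parity, then
`T_S(U) Δ T_S(U₁) = U Δ U₁` meets `S` evenly, so the `ε`-terms vanish and the `τ`-terms cancel
because `x² = x` in `ZMod 2`. In the mixed case `T_S(U) Δ T_S(U₁) = (U Δ U₁ Δ S)ᶜ` meets `S`
oddly, so on it the new function over `U` sums to `∑_{U Δ U₁} φ + ρ(U)` (plus a `τ`-term for
the odd side), and what remains is an identity between values of `b` and `c` on `ZMod 4`. As
`c + b` is 2-periodic, the `c`-values may be replaced by `b`-values, and `τ` compensates the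
dependence of the remaining terms on `|U ∩ U₁| mod 2`. The odd case of `ρ` is forced by
`ψ ∈ L_b(T_S(U))`.
-/

open Finset

lemma natCast_zmod_two_eq_one_of_not_even {n : ℕ} (h : ¬Even n) : (n : ZMod 2) = 1 :=
  ZMod.natCast_eq_one_iff_odd.mpr (Nat.not_even_iff_odd.mp h)

section SymmDiff

variable {V : Type*} [DecidableEq V]

lemma sum_symmDiff_add_two_nsmul_sum_inter {M : Type*} [AddCommMonoid M] (f : V → M)
    (A B : Finset V) :
    ∑ z ∈ A ∆ B, f z + 2 • ∑ z ∈ A ∩ B, f z = ∑ z ∈ A, f z + ∑ z ∈ B, f z := by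
  have hunion : A ∆ B ∪ A ∩ B = A ∪ B := symmDiff_sup_inf A B
  rw [two_nsmul, ← add_assoc, ← sum_union (s₁ := A ∆ B) (s₂ := A ∩ B) (disjoint_symmDiff_inf A B),
    hunion, sum_union_inter]

lemma sum_symmDiff_zmod_two (f : V → ZMod 2) (A B : Finset V) :
    ∑ z ∈ A ∆ B, f z = ∑ z ∈ A, f z + ∑ z ∈ B, f z := by
  rw [← sum_symmDiff_add_two_nsmul_sum_inter, two_nsmul, CharTwo.add_self_eq_zero, add_zero]

lemma natCast_card_symmDiff {R : Type*} [Ring R] (A B : Finset V) :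
    (#(A ∆ B) : R) = #A + #B - 2 * (#(A ∩ B) : R) := by
  have h := sum_symmDiff_add_two_nsmul_sum_inter (fun _ ↦ (1 : R)) A B
  simp only [sum_const, nsmul_one, two_nsmul] at h
  rw [two_mul]
  exact eq_sub_of_add_eq h

lemma natCast_card_symmDiff_zmod_two (A B : Finset V) :
    (#(A ∆ B) : ZMod 2) = #A + #B := by
  simpa using sum_symmDiff_zmod_two (fun _ ↦ (1 : ZMod 2)) A B

lemma natCast_card_symmDiff_inter_zmod_two (A B X : Finset V) :
    (#(A ∆ B ∩ X) : ZMod 2) = #(A ∩ X) + #(B ∩ X) := by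
  rw [show A ∆ B ∩ X = (A ∩ X) ∆ (B ∩ X) from inf_symmDiff_distrib_right A B X,
    natCast_card_symmDiff_zmod_two]

def tcDefect (c : ZMod 4 → ZMod 2) (p q : Finset V × (V → ZMod 2)) : ZMod 2 :=
  ∑ z ∈ p.1 ∆ q.1, (p.2 z + q.2 z) + c #(p.1 ∆ q.1)

lemma TcP_iff_tcDefect_ne_zero {c : ZMod 4 → ZMod 2} {p q : Finset V × (V → ZMod 2)}
    (h : p.1 ≠ q.1) : TcP c p q ↔ tcDefect c p q ≠ 0 := by
  rw [TcP, if_neg h, tcDefect, Ne, Ne, CharTwo.add_eq_zero]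

lemma tcDefect_comm (c : ZMod 4 → ZMod 2) (p q : Finset V × (V → ZMod 2)) :
    tcDefect c p q = tcDefect c q p := by
  simp only [tcDefect, symmDiff_comm p.1, add_comm (p.2 _)]

end SymmDiff

section Complement

variable {V : Type*} [Fintype V] [DecidableEq V]

lemma compl_symmDiff_inter (X S : Finset V) : (X ∆ S)ᶜ ∩ S = X ∩ S := by
  ext z
  simp only [mem_inter, mem_compl, mem_symmDiff]
  tauto

lemma TSmap_TSmap (S U : Finset V) : TSmap S (TSmap S U) = U := by
  by_cases h : Even #(U ∩ S)
  · simp only [TSmap, if_pos h]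
  · have hU : TSmap S U = (U ∆ S)ᶜ := if_neg h
    rw [hU, TSmap, compl_symmDiff_inter, if_neg h]
    ext z
    simp only [mem_compl, mem_symmDiff]
    tauto

lemma TSmap_injective (S : Finset V) : Function.Injective (TSmap S) :=
  Function.LeftInverse.injective (TSmap_TSmap S)

lemma sum_compl_zmod_two (f : V → ZMod 2) (A : Finset V) :
    ∑ z ∈ Aᶜ, f z = ∑ z, f z + ∑ z ∈ A, f z := by
  rw [← sum_add_sum_compl A f, add_comm (∑ z ∈ A, f z), add_assoc, CharTwo.add_self_eq_zero,
    add_zero]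

lemma sum_compl_symmDiff_zmod_two (f : V → ZMod 2) (X S : Finset V) :
    ∑ z ∈ (X ∆ S)ᶜ, f z = ∑ z ∈ X, f z + ∑ z ∈ Sᶜ, f z := by
  rw [sum_compl_zmod_two, sum_compl_zmod_two, sum_symmDiff_zmod_two]
  ring

lemma natCast_card_compl_inter_zmod_two (A X : Finset V) :
    (#(Aᶜ ∩ X) : ZMod 2) = #X + #(A ∩ X) := by
  have h := card_sdiff_add_card_inter X A
  rw [sdiff_eq_inter_compl, inter_comm X, inter_comm X] at h
  rw [← h]
  push_cast
  rw [add_assoc, CharTwo.add_self_eq_zero, add_zero]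

lemma natCast_card_compl {R : Type*} [AddGroupWithOne R] (hN : (Fintype.card V : R) = 0)
    (A : Finset V) : (#Aᶜ : R) = -#A := by
  rw [eq_neg_iff_add_eq_zero, ← Nat.cast_add, add_comm, card_add_card_compl, hN]

lemma natCast_card_compl_symmDiff_zmod_four (h4 : 4 ∣ Fintype.card V) {X S : Finset V}
    (hXS : Odd #(X ∩ S)) : (#(X ∆ S)ᶜ : ZMod 4) = 2 - #X - #S := by
  obtain ⟨j, hj⟩ := hXS
  rw [natCast_card_compl ((ZMod.natCast_eq_zero_iff _ 4).mpr h4), natCast_card_symmDiff, hj]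
  push_cast
  grind

lemma natCast_card_compl_symmDiff_zmod_two (h2 : 2 ∣ Fintype.card V) (X S : Finset V) :
    (#(X ∆ S)ᶜ : ZMod 2) = #X + #S := by
  rw [natCast_card_compl ((ZMod.natCast_eq_zero_iff _ 2).mpr h2),
    natCast_card_symmDiff_zmod_two, neg_add, ZMod.neg_eq_self_mod_two, ZMod.neg_eq_self_mod_two]

end Complement

section Arithmetic

variable (b c : ZMod 4 → ZMod 2)

-- `e x + e (2 - x - s)` only depends on `s`, as `2 - x - s ≡ x + s` modulo 2.
lemma apply_add_apply_two_sub_sub_eq_zero_of_periodic :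
    ∀ e : ZMod 4 → ZMod 2, e 0 = e 2 → e 1 = e 3 →
      ∀ x y s : ZMod 4, e x + e (2 - x - s) + e y + e (2 - y - s) = 0 := by
  decide

lemma c_terms_eq_b_terms (h02 : c 0 + c 2 = b 0 + b 2) (h13 : c 1 + c 3 = b 1 + b 3)
    (x y s : ZMod 4) :
    c x + c (2 - x - s) + c y + c (2 - y - s) = b x + b (2 - x - s) + b y + b (2 - y - s) := by
  have h := apply_add_apply_two_sub_sub_eq_zero_of_periodic (fun x ↦ c x + b x)
    (by grind) (by grind) x y s
  grind

lemma b_terms_eq_mul (u u₁ s k : ℕ) :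
    b u + b (2 - u - s) + b u₁ + b (2 - u₁ - s) + b (u + u₁ - 2 * k)
      + b (2 - (u + u₁ - 2 * k) - s) + b 0 + b (2 - s)
      = (b 0 + b 1 + b 2 + b 3) * s * (k + u * u₁) := by
  have key : let π := ZMod.castHom (show 2 ∣ 4 by norm_num) (ZMod 2)
    ∀ (b : ZMod 4 → ZMod 2) (u u₁ s k : ZMod 4),
      b u + b (2 - u - s) + b u₁ + b (2 - u₁ - s) + b (u + u₁ - 2 * k)
        + b (2 - (u + u₁ - 2 * k) - s) + b 0 + b (2 - s)
      = (b 0 + b 1 + b 2 + b 3) * π s * (π k + π u * π u₁) := by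
    decide
  simpa only [map_natCast] using key b u u₁ s k

lemma switch_identity (h02 : c 0 + c 2 = b 0 + b 2) (h13 : c 1 + c 3 = b 1 + b 3)
    (u u₁ s k : ℕ) :
    c u + c (2 - u - s) + c (u + u₁ - 2 * k) + c (2 - (u + u₁ - 2 * k) - s)
      + b u₁ + b (2 - u₁ - s) + b 0 + b (2 - s) = (b 0 + b 1 + b 2 + b 3) * s * (k + u * u₁) := by
  rw [c_terms_eq_b_terms b c h02 h13, ← b_terms_eq_mul b u u₁ s k]
  ring

end Arithmetic

section Switching

variable {V : Type*} [DecidableEq V] (b c : ZMod 4 → ZMod 2) (S : Finset V)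

-- In the notation of the header: `λ = twistCoeff`, `ρ = switchOffset`, `τ = twist`,
-- `ε = switchScalar`, `ψ = switchFun`.
def twistCoeff : ZMod 2 := (b 0 + b 1 + b 2 + b 3) * #S

def switchOffset (U : Finset V) : ZMod 2 :=
  if Even #(U ∩ S) then c #U + c (2 - #U - #S) + b 0 + b (2 - #S)
  else b #U + b (2 - #U - #S) + twistCoeff b S * (1 + #U + #U * #S)

def twist (U : Finset V) (z : V) : ZMod 2 :=
  if Even #(U ∩ S) then 0 else twistCoeff b S * ((if z ∈ U then 1 else 0) + #U)

variable {b S}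

lemma sum_twist_of_even {U : Finset V} (hU : Even #(U ∩ S)) (W : Finset V) :
    ∑ z ∈ W, twist b S U z = 0 := by
  simp only [twist, if_pos hU, sum_const_zero]

lemma sum_twist_of_not_even {U : Finset V} (hU : ¬Even #(U ∩ S)) (W : Finset V) :
    ∑ z ∈ W, twist b S U z = twistCoeff b S * (#(W ∩ U) + #W * #U) := by
  simp only [twist, if_neg hU, ← mul_sum, sum_add_distrib, sum_boole, filter_mem_eq_inter,
    sum_const, nsmul_eq_mul]

variable [Fintype V] (b S)

def switchScalar (p : Finset V × (V → ZMod 2)) : ZMod 2 :=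
  ∑ y ∈ Sᶜ, p.2 y + switchOffset b c S p.1

def switchFun (p : Finset V × (V → ZMod 2)) (z : V) : ZMod 2 :=
  p.2 z + switchScalar b c S p * (if z ∈ S then 1 else 0) + twist b S p.1 z

def switch (p : Finset V × (V → ZMod 2)) : Finset V × (V → ZMod 2) :=
  (TSmap S p.1, switchFun b c S p)

variable {b c S}

lemma sum_switchFun (p : Finset V × (V → ZMod 2)) (W : Finset V) :
    ∑ z ∈ W, switchFun b c S p z
      = ∑ z ∈ W, p.2 z + switchScalar b c S p * #(W ∩ S) + ∑ z ∈ W, twist b S p.1 z := by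
  simp only [switchFun, sum_add_distrib, ← mul_sum, sum_boole, filter_mem_eq_inter]

lemma switch_injective : Function.Injective (switch b c S) := by
  rintro ⟨U, φ⟩ ⟨U₁, φ₁⟩ h
  simp only [switch, Prod.mk.injEq] at h
  obtain ⟨hT, hψ⟩ := h
  obtain rfl := TSmap_injective S hT
  have hoff : ∀ z ∉ S, φ z = φ₁ z := fun z hz ↦ by
    simpa [switchFun, hz] using congrFun hψ z
  have hscalar : switchScalar b c S (U, φ) = switchScalar b c S (U, φ₁) := by
    simp only [switchScalar, sum_congr rfl fun z hz ↦ hoff z (mem_compl.mp hz)]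
  refine Prod.ext rfl (funext fun z ↦ ?_)
  simpa [switchFun, hscalar] using congrFun hψ z

lemma switch_mem_Lb (h4 : 4 ∣ Fintype.card V) {p : Finset V × (V → ZMod 2)}
    (hp : p.2 ∈ Lb b p.1) : (switch b c S p).2 ∈ Lb b (switch b c S p).1 := by
  obtain ⟨U, φ⟩ := p
  simp only [Lb, Set.mem_ofPred_eq, switch] at hp ⊢
  by_cases hU : Even #(U ∩ S)
  · rw [TSmap, if_pos hU, sum_switchFun, sum_twist_of_even hU, hp,
      ZMod.natCast_eq_zero_iff_even.mpr hU, mul_zero, add_zero, add_zero]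
  · have hSU : (U ∆ S)ᶜ ∩ U = U ∩ S := by rw [symmDiff_comm, compl_symmDiff_inter, inter_comm]
    have hu := ZMod.pow_card (#U : ZMod 2)
    rw [TSmap, if_neg hU, sum_switchFun, sum_twist_of_not_even hU, sum_compl_symmDiff_zmod_two, hp,
      compl_symmDiff_inter, hSU, natCast_zmod_two_eq_one_of_not_even hU,
      natCast_card_compl_symmDiff_zmod_four h4 (Nat.not_even_iff_odd.mp hU),
      natCast_card_compl_symmDiff_zmod_two (dvd_trans (by norm_num) h4)]
    simp only [switchScalar, switchOffset, if_neg hU]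
    grind

lemma tcDefect_switch_of_even_of_even {p q : Finset V × (V → ZMod 2)}
    (hp : Even #(p.1 ∩ S)) (hq : Even #(q.1 ∩ S)) :
    tcDefect c (switch b c S p) (switch b c S q) = tcDefect c p q := by
  obtain ⟨U, φ⟩ := p
  obtain ⟨U₁, φ₁⟩ := q
  have hXS : (#(U ∆ U₁ ∩ S) : ZMod 2) = 0 := by
    rw [natCast_card_symmDiff_inter_zmod_two, ZMod.natCast_eq_zero_iff_even.mpr hp,
      ZMod.natCast_eq_zero_iff_even.mpr hq, add_zero]
  simp only [tcDefect, switch, TSmap, if_pos hp, if_pos hq, sum_add_distrib, sum_switchFun,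
    sum_twist_of_even hp, sum_twist_of_even hq, hXS]
  ring

lemma tcDefect_switch_of_not_even_of_not_even {p q : Finset V × (V → ZMod 2)}
    (hp : ¬Even #(p.1 ∩ S)) (hq : ¬Even #(q.1 ∩ S)) :
    tcDefect c (switch b c S p) (switch b c S q) = tcDefect c p q := by
  obtain ⟨U, φ⟩ := p
  obtain ⟨U₁, φ₁⟩ := q
  have hX : (U ∆ S)ᶜ ∆ (U₁ ∆ S)ᶜ = U ∆ U₁ := by
    rw [compl_symmDiff_compl, symmDiff_symmDiff_symmDiff_comm, symmDiff_self, symmDiff_bot]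
  have hu := ZMod.pow_card (#U : ZMod 2)
  have hu₁ := ZMod.pow_card (#U₁ : ZMod 2)
  simp only [tcDefect, switch, TSmap, if_neg hp, if_neg hq, hX, sum_add_distrib, sum_switchFun,
    sum_twist_of_not_even hp, sum_twist_of_not_even hq, natCast_card_symmDiff_inter_zmod_two,
    natCast_card_symmDiff_zmod_two, inter_self, inter_comm U₁ U,
    natCast_zmod_two_eq_one_of_not_even hp, natCast_zmod_two_eq_one_of_not_even hq]
  grind

lemma tcDefect_switch_of_even_of_not_even (h4 : 4 ∣ Fintype.card V)
    (h02 : c 0 + c 2 = b 0 + b 2) (h13 : c 1 + c 3 = b 1 + b 3) {p q : Finset V × (V → ZMod 2)}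
    (hp : Even #(p.1 ∩ S)) (hq : ¬Even #(q.1 ∩ S)) :
    tcDefect c (switch b c S p) (switch b c S q) = tcDefect c p q := by
  obtain ⟨U, φ⟩ := p
  obtain ⟨U₁, φ₁⟩ := q
  have hW : U ∆ (U₁ ∆ S)ᶜ = (U ∆ U₁ ∆ S)ᶜ := by
    ext z
    simp only [mem_compl, mem_symmDiff]
    tauto
  have hXS : (#(U ∆ U₁ ∩ S) : ZMod 2) = 1 := by
    rw [natCast_card_symmDiff_inter_zmod_two, ZMod.natCast_eq_zero_iff_even.mpr hp,
      natCast_zmod_two_eq_one_of_not_even hq, zero_add]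
  have hX4 : (#(U ∆ U₁) : ZMod 4) = #U + #U₁ - 2 * #(U ∩ U₁) := natCast_card_symmDiff U U₁
  have hu₁ := ZMod.pow_card (#U₁ : ZMod 2)
  have hid := switch_identity b c h02 h13 #U #U₁ #S #(U ∩ U₁)
  simp only [tcDefect, switch, TSmap, if_pos hp, if_neg hq, hW, sum_add_distrib, sum_switchFun,
    sum_twist_of_even hp, sum_twist_of_not_even hq, sum_compl_symmDiff_zmod_two,
    compl_symmDiff_inter, hXS, natCast_card_compl_symmDiff_zmod_four h4
      (ZMod.natCast_eq_one_iff_odd.mp hXS),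
    natCast_card_compl_symmDiff_zmod_two (dvd_trans (by norm_num) h4),
    natCast_card_compl_inter_zmod_two, natCast_card_symmDiff_inter_zmod_two,
    natCast_card_symmDiff_zmod_two, inter_self, inter_comm S U₁,
    natCast_zmod_two_eq_one_of_not_even hq, hX4, switchScalar, switchOffset, twistCoeff]
  grind

lemma tcDefect_switch (h4 : 4 ∣ Fintype.card V) (h02 : c 0 + c 2 = b 0 + b 2)
    (h13 : c 1 + c 3 = b 1 + b 3) (p q : Finset V × (V → ZMod 2)) :
    tcDefect c (switch b c S p) (switch b c S q) = tcDefect c p q := by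
  by_cases hp : Even #(p.1 ∩ S) <;> by_cases hq : Even #(q.1 ∩ S)
  · exact tcDefect_switch_of_even_of_even hp hq
  · exact tcDefect_switch_of_even_of_not_even h4 h02 h13 hp hq
  · rw [tcDefect_comm, tcDefect_switch_of_even_of_not_even h4 h02 h13 hq hp, tcDefect_comm]
  · exact tcDefect_switch_of_not_even_of_not_even hp hq

lemma TcP_switch_iff (h4 : 4 ∣ Fintype.card V) (h02 : c 0 + c 2 = b 0 + b 2)
    (h13 : c 1 + c 3 = b 1 + b 3) (p q : Finset V × (V → ZMod 2)) :
    TcP c (switch b c S p) (switch b c S q) ↔ TcP c p q := by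
  by_cases h : p.1 = q.1
  · have h' : (switch b c S p).1 = (switch b c S q).1 := congrArg (TSmap S) h
    rw [TcP, TcP, if_pos h, if_pos h']
    exact not_congr ⟨fun e ↦ congrArg Prod.snd (switch_injective (Prod.ext h' e)),
      fun e ↦ by rw [Prod.ext h e]⟩
  · have h' : (switch b c S p).1 ≠ (switch b c S q).1 := fun e ↦ h (TSmap_injective S e)
    rw [TcP_iff_tcDefect_ne_zero h, TcP_iff_tcDefect_ne_zero h', tcDefect_switch h4 h02 h13]

end Switching

theorem stmt13 {V : Type*} [Fintype V] [DecidableEq V]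
    (h4 : 4 ∣ Fintype.card V) (b c : ZMod 4 → ZMod 2)
    (hbc02 : c 0 + c 2 = b 0 + b 2) (hbc13 : c 1 + c 3 = b 1 + b 3) :
    ∀ S : Finset V, ∃ θ : AbGround V b ≃ AbGround V b,
      (∀ l : AbGround V b, (θ l).1.1 = TSmap S l.1.1) ∧
      (∀ l l₁ : AbGround V b, Tc b c l l₁ ↔ Tc b c (θ l) (θ l₁)) := by
  intro S
  let θ : AbGround V b → AbGround V b := fun l ↦ ⟨switch b c S l.1, switch_mem_Lb h4 l.2⟩
  have hθ : Function.Injective θ := fun l l₁ h ↦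
    Subtype.ext (switch_injective (congrArg Subtype.val h))
  have : Finite (AbGround V b) := Subtype.finite
  exact ⟨Equiv.ofBijective θ (Finite.injective_iff_bijective.mp hθ), fun l ↦ rfl,
    fun l l₁ ↦ (TcP_switch_iff h4 hbc02 hbc13 l.1 l₁.1).symm⟩
end

section
/- Let V be a finite set with N := |V| divisible by 4, and let b, c : ZMod 4 → ZMod 2 satisfy b(0) = 1, c(0) = 1, b(2) + c(2) = 0, and b(1) + c(1) + b(3) + c(3) = 0. Then there is no bivaluation on the resulting finite coherent orthoalgebra; precisely, there exists no function f : 𝒫^{T_c}(A_b) → ZMod 2 such that f(∅) = 0, f(A_b) = 1, and for all Q, Q₁ ∈ 𝒫^{T_c}(A_b) with Q₁ ⊆ Q^{T_c}: not both f(Q) = 1 and f(Q₁) = 1, and f(((Q ∪ Q₁)^{T_c})^{T_c}) = f(Q) + f(Q₁). -/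
open scoped symmDiff

/-!
For nonempty `U ≠ W`, the polar of the half-block `{(U, φ) ∈ A_b | ∑_{z ∈ W} φ z = t}` is a
`triad`: the union of three half-blocks, on the blocks `U`, `U ∆ W` and `W`. The conditions on
`b` and `c` make `b + c` vanish on even arguments and be constant on odd ones; this makes a triad
look the same from each of its three blocks, so the polar of a triad is the triad with the other
label, and a bivaluation `f` takes complementary values on these two triads. Splitting a
half-block according to the sum over a second set shows that `W ↦ f (triad U W 1)` turns `∆`
into `+`, so it is the sum of its values on singletons.

With `U = V` this gives `∑ᵢ f (triad V {i} 1) = 1`, since `b |V| = b 0 = 1`. With `U = {i}` and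
the symmetries of triads, the same sum becomes `|V|` copies of a constant plus a sum over ordered
pairs `i ≠ j` in which the two orders of each pair contribute `c 2` together; since `4 ∣ |V|`,
both `|V|` and the number of pairs are even, and the sum is `0`.
-/

open Finset Matrix

namespace NoBivaluation

theorem exists_dotProduct_eq_of_linearIndependent {K m n : Type*} [Field K] [Fintype m]
    [Fintype n] {v : m → n → K} (hv : LinearIndependent K v) (t : m → K) :
    ∃ φ : n → K, ∀ i, v i ⬝ᵥ φ = t i := by
  have hrange : LinearMap.range (Matrix.of v).mulVecLin = ⊤ :=
    Submodule.eq_top_of_finrank_eq <| by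
      rw [Module.finrank_fintype_fun_eq_card, ← hv.rank_matrix (M := Matrix.of v)]; rfl
  obtain ⟨φ, hφ⟩ := LinearMap.range_eq_top.mp hrange t
  exact ⟨φ, fun i => congrFun hφ i⟩

theorem sum_sum_erase_eq_choose_two_smul {α M : Type*} [DecidableEq α] [AddCommMonoid M]
    (s : Finset α) (F : α → α → M) (c : M)
    (h : ∀ i ∈ s, ∀ j ∈ s, i ≠ j → F i j + F j i = c) :
    ∑ i ∈ s, ∑ j ∈ s.erase i, F i j = (#s).choose 2 • c := by
  induction s using Finset.induction_on with
  | empty => simp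
  | insert a s has ih =>
    have hinner : ∀ i ∈ s, ∑ j ∈ (insert a s).erase i, F i j =
        F i a + ∑ j ∈ s.erase i, F i j := fun i hi => by
      rw [erase_insert_of_ne (ne_of_mem_of_not_mem hi has).symm,
        sum_insert fun h => has (mem_of_mem_erase h)]
    have hpair : ∑ j ∈ s, F a j + ∑ i ∈ s, F i a = #s • c := by
      rw [← sum_add_distrib, ← sum_const]
      exact sum_congr rfl fun j hj => h a (mem_insert_self a s) j (mem_insert_of_mem hj)
        (ne_of_mem_of_not_mem hj has).symm
    rw [sum_insert has, erase_insert has, sum_congr rfl hinner, sum_add_distrib,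
      ih fun i hi j hj => h i (mem_insert_of_mem hi) j (mem_insert_of_mem hj),
      card_insert_of_notMem has, Nat.choose_succ_succ', Nat.choose_one_right, add_smul, ← hpair]
    abel

theorem ZMod.two_eq_zero_or_one (x : ZMod 2) : x = 0 ∨ x = 1 := by
  revert x; decide

theorem ZMod.two_eq_add_one_of_ne {x y : ZMod 2} (h : x ≠ y) : x = y + 1 := by
  revert x y; decide

theorem add_natCast_eq_mul_of_parity {b c : ZMod 4 → ZMod 2} (hb0 : b 0 = 1) (hc0 : c 0 = 1)
    (hbc2 : b 2 + c 2 = 0) (hbc13 : b 1 + c 1 + b 3 + c 3 = 0) (n : ℕ) :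
    b n + c n = (b 1 + c 1) * n := by
  have h4 : (n : ZMod 4) = ((n % 4 : ℕ) : ZMod 4) := (ZMod.natCast_mod n 4).symm
  have h2 : (n : ZMod 2) = ((n % 4 : ℕ) : ZMod 2) := by
    rw [ZMod.natCast_eq_natCast_iff']; omega
  rw [h4, h2]
  have : n % 4 < 4 := Nat.mod_lt n (by norm_num)
  interval_cases n % 4
  all_goals simp only [Nat.cast_zero, Nat.cast_one, Nat.cast_ofNat]
  all_goals grind [ZMod.natCast_self]

section Polar

variable {α : Type*} (T : α → α → Prop)

theorem polar_union (A B : Set α) : polar T (A ∪ B) = polar T A ∩ polar T B := by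
  ext m
  simp only [polar, Set.mem_ofPred_eq, Set.mem_union, Set.mem_inter_iff, or_imp, forall_and]

theorem polar_empty : polar T ∅ = Set.univ := by
  ext m
  simp [polar]

theorem inter_polar_self_eq_empty (hT : IrreflRel T) (A : Set α) : A ∩ polar T A = ∅ :=
  Set.eq_empty_iff_forall_notMem.mpr fun m ⟨hmA, hm⟩ => hT m (hm m hmA)

def IsOrthoAdditive (f : Set α → ZMod 2) : Prop :=
  ∀ Q ∈ PTup T, ∀ Q₁ ∈ PTup T, Q₁ ⊆ polar T Q → f (polar T (polar T (Q ∪ Q₁))) = f Q + f Q₁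

end Polar

variable {V : Type*}

theorem four_le_card [Fintype V] (h4 : 4 ∣ Fintype.card V) (i : V) : 4 ≤ Fintype.card V :=
  Nat.le_of_dvd (Fintype.card_pos_iff.mpr ⟨i⟩) h4

theorem card_univ_cast [Fintype V] (h4 : 4 ∣ Fintype.card V) :
    ((#(univ : Finset V) : ℕ) : ZMod 4) = 0 := by
  rw [card_univ]; exact (ZMod.natCast_eq_zero_iff _ 4).mpr h4

theorem univ_ne_singleton [Fintype V] (h4 : 4 ∣ Fintype.card V) (i : V) :
    (univ : Finset V) ≠ {i} := fun h => by
  have := four_le_card h4 i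
  rw [← card_univ, h, card_singleton] at this
  omega

variable [DecidableEq V]

def indicatorVec (A : Finset V) : V → ZMod 2 := fun z => if z ∈ A then 1 else 0

theorem indicatorVec_symmDiff (A B : Finset V) :
    indicatorVec (A ∆ B) = indicatorVec A + indicatorVec B := by
  funext z
  by_cases hA : z ∈ A <;> by_cases hB : z ∈ B <;> simp [indicatorVec, mem_symmDiff, hA, hB]
  decide

theorem indicatorVec_injective : Function.Injective (indicatorVec (V := V)) := by
  intro A B h
  ext z
  have := congrFun h z
  unfold indicatorVec at this
  split_ifs at this <;> simp_all

theorem indicatorVec_empty : indicatorVec (∅ : Finset V) = 0 := by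
  funext z; simp [indicatorVec]

theorem linearIndependent_indicatorVec_pair {U W : Finset V} (hU : U ≠ ∅) (hW : W ≠ ∅)
    (hUW : U ≠ W) : LinearIndependent (ZMod 2) ![indicatorVec U, indicatorVec W] := by
  have hU0 : indicatorVec U ≠ 0 := by
    simpa [← indicatorVec_empty] using indicatorVec_injective.ne hU
  rw [LinearIndependent.pair_iff' hU0]
  intro a
  rcases ZMod.two_eq_zero_or_one a with rfl | rfl
  · simpa [← indicatorVec_empty] using indicatorVec_injective.ne hW.symm
  · simpa using indicatorVec_injective.ne hUW

theorem linearIndependent_indicatorVec_triple {U W E : Finset V} (hU : U ≠ ∅) (hW : W ≠ ∅)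
    (hUW : U ≠ W) (hE : E ≠ ∅) (hEU : E ≠ U) (hEW : E ≠ W) (hEUW : E ≠ U ∆ W) :
    LinearIndependent (ZMod 2) ![indicatorVec E, indicatorVec U, indicatorVec W] := by
  refine linearIndependent_finCons.mpr ⟨linearIndependent_indicatorVec_pair hU hW hUW, ?_⟩
  rw [range_cons_cons_empty, Submodule.mem_span_pair]
  rintro ⟨a, a', h⟩
  rcases ZMod.two_eq_zero_or_one a with rfl | rfl <;>
    rcases ZMod.two_eq_zero_or_one a' with rfl | rfl <;>
    simp only [zero_smul, one_smul, zero_add, add_zero, ← indicatorVec_symmDiff] at h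
  · exact hE (indicatorVec_injective (h.symm.trans indicatorVec_empty.symm))
  exacts [hEW (indicatorVec_injective h).symm, hEU (indicatorVec_injective h).symm,
    hEUW (indicatorVec_injective h).symm]

theorem card_singleton_symmDiff_singleton {i j : V} (hij : i ≠ j) : #({i} ∆ {j}) = 2 := by
  rw [(disjoint_singleton.mpr hij).symmDiff_eq_sup, sup_eq_union, ← insert_eq, card_pair hij]

variable (b c : ZMod 4 → ZMod 2)

theorem block_ne_empty (hb0 : b 0 = 1) (l : AbGround V b) : l.1.1 ≠ ∅ := by
  intro h
  have hl : ∑ z ∈ l.1.1, l.1.2 z = b #l.1.1 := l.2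
  simp [h, hb0] at hl

theorem sum_block {l : AbGround V b} {U : Finset V} (hl : l.1.1 = U) :
    ∑ z ∈ U, l.1.2 z = b #U :=
  hl ▸ l.2

theorem tc_iff_of_block_eq {l m : AbGround V b} (h : l.1.1 = m.1.1) :
    Tc b c l m ↔ l.1.2 ≠ m.1.2 := by
  rw [Tc, TcP, if_pos h]

theorem tc_iff_of_block_ne {l m : AbGround V b} {X Y : Finset V} (hl : l.1.1 = X)
    (hm : m.1.1 = Y) (hXY : X ≠ Y) :
    Tc b c l m ↔ ∑ z ∈ X ∆ Y, l.1.2 z + ∑ z ∈ X ∆ Y, m.1.2 z ≠ c #(X ∆ Y) := by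
  rw [Tc, TcP, if_neg (hl ▸ hm ▸ hXY), hl, hm, sum_add_distrib]

theorem tc_irrefl : IrreflRel (Tc (V := V) b c) := fun l => by
  simp [tc_iff_of_block_eq]

theorem mem_PTset_of_forall_block_eq (U : Finset V) {S : Set (AbGround V b)}
    (hS : ∀ l ∈ S, l.1.1 = U) : S ∈ PTset (Tc b c) := by
  intro l hl l₁ hl₁ hne
  rw [tc_iff_of_block_eq b c ((hS l hl).trans (hS l₁ hl₁).symm)]
  exact fun h => hne (Subtype.ext (Prod.ext ((hS l₁ hl₁).trans (hS l hl).symm) h.symm))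

def halfBlock (U W : Finset V) (t : ZMod 2) : Set (AbGround V b) :=
  {l | l.1.1 = U ∧ ∑ z ∈ W, l.1.2 z = t}

/-- The polar of `halfBlock b U W (t + 1)`, see `polar_halfBlock`. -/
def triad (U W : Finset V) (t : ZMod 2) : Set (AbGround V b) :=
  halfBlock b U W t ∪ halfBlock b (U ∆ W) W (c #W + t) ∪
    halfBlock b W (U ∆ W) (c #(U ∆ W) + b #U + t)

variable {b c}

theorem block_of_mem_triad {U W : Finset V} {t : ZMod 2} {l : AbGround V b}
    (hl : l ∈ triad b c U W t) : l.1.1 = U ∨ l.1.1 = U ∆ W ∨ l.1.1 = W := by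
  rcases hl with (hl | hl) | hl
  exacts [Or.inl hl.1, Or.inr (Or.inl hl.1), Or.inr (Or.inr hl.1)]

theorem mem_triad_iff_of_block_eq {U W : Finset V} (hW : W ≠ ∅) (hUW : U ≠ W) {t : ZMod 2}
    {l : AbGround V b} (hl : l.1.1 = U) : l ∈ triad b c U W t ↔ ∑ z ∈ W, l.1.2 z = t := by
  refine ⟨fun h => ?_, fun h => Or.inl (Or.inl ⟨hl, h⟩)⟩
  rcases h with (h | h) | h
  · exact h.2
  · exact absurd (hl.symm.trans h.1) (by rwa [eq_comm, symmDiff_eq_left])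
  · exact absurd (hl.symm.trans h.1) hUW

theorem triad_inter_triad {U W₁ W₂ : Finset V} (hW₁ : W₁ ≠ ∅) (hW₂ : W₂ ≠ ∅)
    (hW₁₂ : W₁ ≠ W₂) (hUW₁ : U ≠ W₁) (hUW₂ : U ≠ W₂) (hUW₁₂ : U ≠ W₁ ∆ W₂) (t₁ t₂ : ZMod 2) :
    triad b c U W₁ t₁ ∩ triad b c U W₂ t₂ = halfBlock b U W₁ t₁ ∩ halfBlock b U W₂ t₂ := by
  ext l
  refine ⟨fun ⟨h₁, h₂⟩ => ?_, fun ⟨h₁, h₂⟩ => ⟨Or.inl (Or.inl h₁), Or.inl (Or.inl h₂)⟩⟩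
  by_cases hl : l.1.1 = U
  · exact ⟨⟨hl, (mem_triad_iff_of_block_eq hW₁ hUW₁ hl).mp h₁⟩,
      ⟨hl, (mem_triad_iff_of_block_eq hW₂ hUW₂ hl).mp h₂⟩⟩
  exfalso
  rcases block_of_mem_triad h₁ with h₁ | h₁ | h₁ <;> try exact hl h₁
  all_goals rcases block_of_mem_triad h₂ with h₂ | h₂ | h₂ <;> try exact hl h₂
  · exact hW₁₂ (symmDiff_right_inj.mp (h₁.symm.trans h₂))
  · exact hUW₁₂ (by rw [← h₁.symm.trans h₂, symmDiff_comm U, symmDiff_symmDiff_cancel_left])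
  · exact hUW₁₂ (by rw [h₁.symm.trans h₂, symmDiff_symmDiff_cancel_right])
  · exact hW₁₂ (h₁.symm.trans h₂)

theorem halfBlock_inter_halfBlock_subset_polar {U W₁ W₂ : Finset V} {t₁ t₂ s₁ s₂ : ZMod 2}
    (h : (t₁, t₂) ≠ (s₁, s₂)) :
    halfBlock b U W₁ s₁ ∩ halfBlock b U W₂ s₂ ⊆
      polar (Tc b c) (halfBlock b U W₁ t₁ ∩ halfBlock b U W₂ t₂) := by
  rintro m ⟨⟨hmU, hm₁⟩, -, hm₂⟩ l ⟨⟨hlU, hl₁⟩, -, hl₂⟩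
  rw [tc_iff_of_block_eq b c (hlU.trans hmU.symm)]
  intro hlm
  exact h (by rw [← hl₁, ← hl₂, ← hm₁, ← hm₂, hlm])

variable [Fintype V]

theorem indicatorVec_dotProduct (A : Finset V) (φ : V → ZMod 2) :
    indicatorVec A ⬝ᵥ φ = ∑ z ∈ A, φ z := by
  simp [dotProduct, indicatorVec, ite_mul]

theorem sum_symmDiff (φ : V → ZMod 2) (A B : Finset V) :
    ∑ z ∈ A ∆ B, φ z = ∑ z ∈ A, φ z + ∑ z ∈ B, φ z := by
  simp only [← indicatorVec_dotProduct, indicatorVec_symmDiff, add_dotProduct]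

theorem card_symmDiff_cast (A B : Finset V) :
    ((#(A ∆ B) : ℕ) : ZMod 2) = #A + #B := by
  simpa using sum_symmDiff (fun _ => 1) A B

theorem exists_sum_eq_pair {U W : Finset V} (hU : U ≠ ∅) (hW : W ≠ ∅) (hUW : U ≠ W)
    (s t : ZMod 2) : ∃ φ : V → ZMod 2, ∑ z ∈ U, φ z = s ∧ ∑ z ∈ W, φ z = t := by
  obtain ⟨φ, hφ⟩ := exists_dotProduct_eq_of_linearIndependent
    (linearIndependent_indicatorVec_pair hU hW hUW) ![s, t]
  simp only [← indicatorVec_dotProduct]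
  exact ⟨φ, hφ 0, hφ 1⟩

theorem exists_sum_eq_triple {U W E : Finset V} (hU : U ≠ ∅) (hW : W ≠ ∅)
    (hUW : U ≠ W) (hE : E ≠ ∅) (hEU : E ≠ U) (hEW : E ≠ W) (hEUW : E ≠ U ∆ W)
    (r s t : ZMod 2) :
    ∃ φ : V → ZMod 2, ∑ z ∈ E, φ z = r ∧ ∑ z ∈ U, φ z = s ∧ ∑ z ∈ W, φ z = t := by
  obtain ⟨φ, hφ⟩ := exists_dotProduct_eq_of_linearIndependent
    (linearIndependent_indicatorVec_triple hU hW hUW hE hEU hEW hEUW) ![r, s, t]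
  simp only [← indicatorVec_dotProduct]
  exact ⟨φ, hφ 0, hφ 1, hφ 2⟩

theorem univ_erase_nonempty (h4 : 4 ∣ Fintype.card V) (i : V) : (univ.erase i).Nonempty := by
  rw [← card_pos, card_erase_of_mem (mem_univ i), card_univ]
  have := four_le_card h4 i
  omega

theorem card_univ_erase_cast (h4 : 4 ∣ Fintype.card V) (i : V) :
    ((#(univ.erase i) : ℕ) : ZMod 4) = 3 := by
  have := four_le_card h4 i
  obtain ⟨m, hm⟩ := h4
  rw [card_erase_of_mem (mem_univ i), card_univ,
    show Fintype.card V - 1 = 3 + 4 * (m - 1) by omega]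
  push_cast
  rw [show (4 : ZMod 4) = 0 from rfl, zero_mul, add_zero]

theorem univ_symmDiff_singleton (i : V) : (univ : Finset V) ∆ {i} = univ.erase i := by
  ext j; by_cases h : j = i <;> simp [mem_symmDiff, h]

theorem singleton_symmDiff_univ_erase (i : V) : {i} ∆ univ.erase i = (univ : Finset V) := by
  ext j; by_cases h : j = i <;> simp [mem_symmDiff, h]

theorem exists_mem_halfBlock {U W : Finset V} (hU : U ≠ ∅) (hW : W ≠ ∅) (hUW : U ≠ W)
    (t : ZMod 2) : ∃ l, l ∈ halfBlock b U W t := by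
  obtain ⟨φ, hφU, hφW⟩ := exists_sum_eq_pair hU hW hUW (b #U) t
  exact ⟨⟨(U, φ), hφU⟩, rfl, hφW⟩

/-- On a block `X` other than `∅`, `U`, `W` and `U ∆ W`, the sum over `U ∆ X` is not constant
on `halfBlock b U W t`, so no element of `X` is related to all of it. -/
theorem exists_mem_halfBlock_sum_eq {U W X : Finset V} (hU : U ≠ ∅) (hW : W ≠ ∅)
    (hUW : U ≠ W) (hX : X ≠ ∅) (hXU : X ≠ U) (hXW : X ≠ W) (hXUW : X ≠ U ∆ W)
    (t r : ZMod 2) : ∃ l ∈ halfBlock b U W t, ∑ z ∈ U ∆ X, l.1.2 z = r := by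
  obtain ⟨φ, hφE, hφU, hφW⟩ := exists_sum_eq_triple hU hW hUW (E := U ∆ X)
    (by rwa [Ne, Finset.symmDiff_eq_empty, eq_comm]) (by rwa [Ne, symmDiff_eq_left])
    (fun h => hXUW (h ▸ (symmDiff_symmDiff_cancel_left U X).symm))
    (by rwa [Ne, symmDiff_right_inj]) r (b #U) t
  exact ⟨⟨(U, φ), hφU⟩, ⟨rfl, hφW⟩, hφE⟩

theorem polar_halfBlock_subset_triad (hb0 : b 0 = 1) {U W : Finset V} (hU : U ≠ ∅)
    (hW : W ≠ ∅) (hUW : U ≠ W) (t : ZMod 2) :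
    polar (Tc b c) (halfBlock b U W t) ⊆ triad b c U W (t + 1) := by
  intro m hm
  by_cases hXU : m.1.1 = U
  · refine Or.inl (Or.inl ⟨hXU, ?_⟩)
    by_contra hne
    exact tc_irrefl b c m (hm m ⟨hXU, by grind [ZMod.two_eq_add_one_of_ne hne]⟩)
  have hrel : ∀ l ∈ halfBlock b U W t,
      ∑ z ∈ U ∆ m.1.1, l.1.2 z + ∑ z ∈ U ∆ m.1.1, m.1.2 z = c #(U ∆ m.1.1) + 1 :=
    fun l hl => ZMod.two_eq_add_one_of_ne <|
      (tc_iff_of_block_ne b c hl.1 rfl (Ne.symm hXU)).mp (hm l hl)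
  obtain ⟨l₀, hl₀U, hl₀W⟩ := exists_mem_halfBlock (b := b) hU hW hUW t
  by_cases hXD : m.1.1 = U ∆ W
  · refine Or.inl (Or.inr ⟨hXD, ?_⟩)
    have h₀ := hrel l₀ ⟨hl₀U, hl₀W⟩
    rw [hXD, symmDiff_symmDiff_cancel_left, hl₀W] at h₀
    grind
  by_cases hXW : m.1.1 = W
  · refine Or.inr ⟨hXW, ?_⟩
    have h₀ := hrel l₀ ⟨hl₀U, hl₀W⟩
    rw [hXW, sum_symmDiff, sum_block b hl₀U, hl₀W] at h₀
    grind
  obtain ⟨l₁, hl₁, hl₁E⟩ := exists_mem_halfBlock_sum_eq (b := b) hU hW hUW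
    (block_ne_empty b hb0 m) hXU hXW hXD t 0
  obtain ⟨l₂, hl₂, hl₂E⟩ := exists_mem_halfBlock_sum_eq (b := b) hU hW hUW
    (block_ne_empty b hb0 m) hXU hXW hXD t 1
  have h₁ := hrel l₁ hl₁
  have h₂ := hrel l₂ hl₂
  grind

theorem triad_subset_polar_halfBlock {U W : Finset V} (hW : W ≠ ∅) (hUW : U ≠ W)
    (t : ZMod 2) : triad b c U W (t + 1) ⊆ polar (Tc b c) (halfBlock b U W t) := by
  rintro m ((⟨hmU, hmW⟩ | ⟨hmD, hmW⟩) | ⟨hmW, hmD⟩) l ⟨hlU, hlW⟩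
  · rw [tc_iff_of_block_eq b c (hlU.trans hmU.symm)]
    intro h
    grind
  · rw [tc_iff_of_block_ne b c hlU hmD (by rwa [Ne, eq_comm, symmDiff_eq_left]),
      symmDiff_symmDiff_cancel_left, hlW, hmW]
    grind
  · rw [tc_iff_of_block_ne b c hlU hmW hUW, hmD, sum_symmDiff, sum_block b hlU, hlW]
    grind

theorem polar_halfBlock (hb0 : b 0 = 1) {U W : Finset V} (hU : U ≠ ∅) (hW : W ≠ ∅)
    (hUW : U ≠ W) (t : ZMod 2) :
    polar (Tc b c) (halfBlock b U W t) = triad b c U W (t + 1) :=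
  (polar_halfBlock_subset_triad hb0 hU hW hUW t).antisymm
    (triad_subset_polar_halfBlock hW hUW t)

theorem add_card_add_add_card_symmDiff (hbc : ∀ n : ℕ, b n + c n = (b 1 + c 1) * n)
    (X Y : Finset V) : b #X + c #X + (b #Y + c #Y) = b #(X ∆ Y) + c #(X ∆ Y) := by
  rw [hbc, hbc, hbc, card_symmDiff_cast]; ring

theorem halfBlock_eq_symmDiff (U W : Finset V) (t : ZMod 2) :
    halfBlock b U W t = halfBlock b U (U ∆ W) (b #U + t) := by
  ext l
  refine and_congr_right fun hl => ?_
  rw [sum_symmDiff, sum_block b hl, add_right_inj]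

theorem triad_symmDiff_right (U W : Finset V) (t : ZMod 2) :
    triad b c U W t = triad b c U (U ∆ W) (b #U + t) := by
  simp only [triad]
  rw [symmDiff_symmDiff_cancel_left, ← halfBlock_eq_symmDiff, ← add_assoc,
    show c #W + b #U + (b #U + t) = c #W + t by grind, Set.union_right_comm]

theorem triad_symmDiff_left (hbc : ∀ n : ℕ, b n + c n = (b 1 + c 1) * n) (U W : Finset V)
    (t : ZMod 2) : triad b c U W t = triad b c (U ∆ W) W (c #W + t) := by
  simp only [triad]
  have := add_card_add_add_card_symmDiff hbc U W
  rw [symmDiff_symmDiff_cancel_right, halfBlock_eq_symmDiff W U, symmDiff_comm W U,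
    CharTwo.add_cancel_left,
    show b #W + (c #U + b #(U ∆ W) + (c #W + t)) = c #(U ∆ W) + b #U + t by grind,
    Set.union_comm (halfBlock b (U ∆ W) W _)]

theorem triad_rotate (hbc : ∀ n : ℕ, b n + c n = (b 1 + c 1) * n) (U W : Finset V)
    (t : ZMod 2) : triad b c U W t = triad b c W (U ∆ W) (c #(U ∆ W) + b #U + t) := by
  rw [triad_symmDiff_right, triad_symmDiff_left hbc, symmDiff_symmDiff_cancel_left, add_assoc]

theorem triad_swap (hbc : ∀ n : ℕ, b n + c n = (b 1 + c 1) * n) (U W : Finset V)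
    (t : ZMod 2) : triad b c U W t = triad b c W U (b #W + (c #(U ∆ W) + b #U + t)) := by
  rw [triad_rotate hbc, triad_symmDiff_right W, symmDiff_comm U W,
    symmDiff_symmDiff_cancel_left]

theorem polar_triad (hb0 : b 0 = 1) (hbc : ∀ n : ℕ, b n + c n = (b 1 + c 1) * n)
    {U W : Finset V} (hU : U ≠ ∅) (hW : W ≠ ∅) (hUW : U ≠ W) (t : ZMod 2) :
    polar (Tc b c) (triad b c U W t) = triad b c U W (t + 1) := by
  have hD : U ∆ W ≠ ∅ := by rwa [Ne, Finset.symmDiff_eq_empty]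
  have hDW : U ∆ W ≠ W := by rwa [Ne, symmDiff_eq_right]
  rw [triad, polar_union, polar_union, polar_halfBlock hb0 hU hW hUW,
    polar_halfBlock hb0 hD hW hDW, polar_halfBlock hb0 hW hD hDW.symm,
    add_assoc, ← triad_symmDiff_left hbc, add_assoc, ← triad_rotate hbc,
    Set.inter_self, Set.inter_self]

theorem polar_polar_halfBlock (hb0 : b 0 = 1) (hbc : ∀ n : ℕ, b n + c n = (b 1 + c 1) * n)
    {U W : Finset V} (hU : U ≠ ∅) (hW : W ≠ ∅) (hUW : U ≠ W) (t : ZMod 2) :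
    polar (Tc b c) (polar (Tc b c) (halfBlock b U W t)) = triad b c U W t := by
  rw [polar_halfBlock hb0 hU hW hUW, polar_triad hb0 hbc hU hW hUW, CharTwo.add_cancel_right]

theorem triad_mem_PTup (hb0 : b 0 = 1) {U W : Finset V} (hU : U ≠ ∅) (hW : W ≠ ∅)
    (hUW : U ≠ W) (t : ZMod 2) : triad b c U W t ∈ PTup (Tc b c) :=
  ⟨halfBlock b U W (t + 1), mem_PTset_of_forall_block_eq b c U fun _ hl => hl.1, by
    rw [polar_halfBlock hb0 hU hW hUW, CharTwo.add_cancel_right]⟩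

theorem halfBlock_inter_halfBlock_mem_PTup (hb0 : b 0 = 1) {U W₁ W₂ : Finset V} (hU : U ≠ ∅)
    (hW₁ : W₁ ≠ ∅) (hW₂ : W₂ ≠ ∅) (hW₁₂ : W₁ ≠ W₂) (hUW₁ : U ≠ W₁) (hUW₂ : U ≠ W₂)
    (hUW₁₂ : U ≠ W₁ ∆ W₂) (t₁ t₂ : ZMod 2) :
    halfBlock b U W₁ t₁ ∩ halfBlock b U W₂ t₂ ∈ PTup (Tc b c) :=
  ⟨halfBlock b U W₁ (t₁ + 1) ∪ halfBlock b U W₂ (t₂ + 1),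
    mem_PTset_of_forall_block_eq b c U (by rintro l (hl | hl) <;> exact hl.1), by
      rw [polar_union, polar_halfBlock hb0 hU hW₁ hUW₁, polar_halfBlock hb0 hU hW₂ hUW₂,
        CharTwo.add_cancel_right, CharTwo.add_cancel_right,
        triad_inter_triad hW₁ hW₂ hW₁₂ hUW₁ hUW₂ hUW₁₂]⟩

variable {f : Set (AbGround V b) → ZMod 2}

theorem IsOrthoAdditive.apply_triad_add_one (hf : IsOrthoAdditive (Tc b c) f)
    (hfu : f Set.univ = 1) (hb0 : b 0 = 1) (hbc : ∀ n : ℕ, b n + c n = (b 1 + c 1) * n)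
    {U W : Finset V} (hU : U ≠ ∅) (hW : W ≠ ∅) (hUW : U ≠ W) (t : ZMod 2) :
    f (triad b c U W (t + 1)) = f (triad b c U W t) + 1 := by
  have hpolar := polar_triad hb0 hbc hU hW hUW
  have hdisj := inter_polar_self_eq_empty _ (tc_irrefl b c) (triad b c U W (t + 1))
  have h := hf _ (triad_mem_PTup hb0 hU hW hUW t) _ (triad_mem_PTup hb0 hU hW hUW (t + 1))
    (hpolar t).ge
  rw [polar_union, hpolar, hpolar, ← hpolar (t + 1), hdisj, polar_empty, hfu] at h
  grind

theorem IsOrthoAdditive.apply_triad_add (hf : IsOrthoAdditive (Tc b c) f)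
    (hfu : f Set.univ = 1) (hb0 : b 0 = 1) (hbc : ∀ n : ℕ, b n + c n = (b 1 + c 1) * n)
    {U W : Finset V} (hU : U ≠ ∅) (hW : W ≠ ∅) (hUW : U ≠ W) (t s : ZMod 2) :
    f (triad b c U W (t + s)) = f (triad b c U W t) + s := by
  rcases ZMod.two_eq_zero_or_one s with rfl | rfl
  · simp
  · exact hf.apply_triad_add_one hfu hb0 hbc hU hW hUW t

theorem IsOrthoAdditive.apply_triad_symmDiff (hf : IsOrthoAdditive (Tc b c) f)
    (hb0 : b 0 = 1) (hbc : ∀ n : ℕ, b n + c n = (b 1 + c 1) * n) {U W₁ W₂ : Finset V}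
    (hU : U ≠ ∅) (hW₁ : W₁ ≠ ∅) (hW₂ : W₂ ≠ ∅) (hW₁₂ : W₁ ≠ W₂) (hUW₁ : U ≠ W₁)
    (hUW₂ : U ≠ W₂) (hUW₁₂ : U ≠ W₁ ∆ W₂) :
    f (triad b c U (W₁ ∆ W₂) 1) = f (triad b c U W₁ 1) + f (triad b c U W₂ 1) := by
  set R : ZMod 2 → ZMod 2 → Set (AbGround V b) :=
    fun a a' => halfBlock b U W₁ a ∩ halfBlock b U W₂ a'
  have hadd : ∀ a a' e e', (a, a') ≠ (e, e') →
      f (polar (Tc b c) (polar (Tc b c) (R a a' ∪ R e e'))) = f (R a a') + f (R e e') :=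
    fun a a' e e' hne =>
      hf _ (halfBlock_inter_halfBlock_mem_PTup hb0 hU hW₁ hW₂ hW₁₂ hUW₁ hUW₂ hUW₁₂ a a') _
        (halfBlock_inter_halfBlock_mem_PTup hb0 hU hW₁ hW₂ hW₁₂ hUW₁ hUW₂ hUW₁₂ e e')
        (halfBlock_inter_halfBlock_subset_polar hne)
  have h₁ : R 1 0 ∪ R 1 1 = halfBlock b U W₁ 1 := by
    ext l
    simp only [R, halfBlock, Set.mem_union, Set.mem_inter_iff, Set.mem_ofPred_eq]
    rcases ZMod.two_eq_zero_or_one (∑ z ∈ W₂, l.1.2 z) with h | h <;> simp [h] <;> tauto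
  have h₂ : R 0 1 ∪ R 1 1 = halfBlock b U W₂ 1 := by
    ext l
    simp only [R, halfBlock, Set.mem_union, Set.mem_inter_iff, Set.mem_ofPred_eq]
    rcases ZMod.two_eq_zero_or_one (∑ z ∈ W₁, l.1.2 z) with h | h <;> simp [h]
  have h₁₂ : R 0 1 ∪ R 1 0 = halfBlock b U (W₁ ∆ W₂) 1 := by
    ext l
    simp only [R, halfBlock, Set.mem_union, Set.mem_inter_iff, Set.mem_ofPred_eq, sum_symmDiff]
    rcases ZMod.two_eq_zero_or_one (∑ z ∈ W₁, l.1.2 z) with h | h <;>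
      rcases ZMod.two_eq_zero_or_one (∑ z ∈ W₂, l.1.2 z) with h' | h' <;> simp [h, h']
  have e₁ := hadd 1 0 1 1 (by decide)
  have e₂ := hadd 0 1 1 1 (by decide)
  have e₁₂ := hadd 0 1 1 0 (by decide)
  rw [h₁, polar_polar_halfBlock hb0 hbc hU hW₁ hUW₁] at e₁
  rw [h₂, polar_polar_halfBlock hb0 hbc hU hW₂ hUW₂] at e₂
  rw [h₁₂, polar_polar_halfBlock hb0 hbc hU (by rwa [Ne, Finset.symmDiff_eq_empty]) hUW₁₂]
    at e₁₂
  grind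

theorem IsOrthoAdditive.apply_triad_eq_sum (hf : IsOrthoAdditive (Tc b c) f)
    (hb0 : b 0 = 1) (hbc : ∀ n : ℕ, b n + c n = (b 1 + c 1) * n) {U W : Finset V} {z₀ : V}
    (hz₀U : z₀ ∈ U) (hz₀W : z₀ ∉ W) (hW : W.Nonempty) :
    f (triad b c U W 1) = ∑ j ∈ W, f (triad b c U {j} 1) := by
  induction hW using Finset.Nonempty.cons_induction with
  | singleton a => simp
  | cons a s has hs ih =>
    have hz₀s : z₀ ∉ s := fun h => hz₀W (mem_cons_of_mem h)
    have hcons : cons a s has = {a} ∆ s := by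
      rw [cons_eq_insert, insert_eq, (disjoint_singleton_left.mpr has).symmDiff_eq_sup,
        sup_eq_union]
    rw [sum_cons, ← ih hz₀s, hcons]
    exact hf.apply_triad_symmDiff hb0 hbc (ne_empty_of_mem hz₀U) (singleton_ne_empty a)
      hs.ne_empty (fun h => has (h ▸ mem_singleton_self a))
      (ne_of_mem_of_not_mem' hz₀U fun h => hz₀W (mem_singleton.mp h ▸ mem_cons_self a s))
      (ne_of_mem_of_not_mem' hz₀U hz₀s) (ne_of_mem_of_not_mem' hz₀U (hcons ▸ hz₀W))

theorem IsOrthoAdditive.sum_apply_triad_univ_singleton_eq_one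
    (hf : IsOrthoAdditive (Tc b c) f) (hfu : f Set.univ = 1) (hb0 : b 0 = 1)
    (hbc : ∀ n : ℕ, b n + c n = (b 1 + c 1) * n) (h4 : 4 ∣ Fintype.card V) (z₀ : V) :
    ∑ i, f (triad b c univ {i} 1) = 1 := by
  have hsum := hf.apply_triad_eq_sum hb0 hbc (mem_univ z₀) (notMem_erase z₀ univ)
    (univ_erase_nonempty h4 z₀)
  have hflip : triad b c univ (univ.erase z₀) 1 = triad b c univ {z₀} 0 := by
    rw [triad_symmDiff_right univ {z₀} 0, univ_symmDiff_singleton, card_univ_cast h4, hb0,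
      add_zero]
  have hshift := hf.apply_triad_add_one hfu hb0 hbc (ne_empty_of_mem (mem_univ z₀))
    (singleton_ne_empty z₀) (univ_ne_singleton h4 z₀) 0
  rw [← add_sum_erase _ _ (mem_univ z₀), ← hsum, hflip, ← zero_add 1, hshift]
  grind

theorem IsOrthoAdditive.apply_triad_univ_singleton_add (hf : IsOrthoAdditive (Tc b c) f)
    (hfu : f Set.univ = 1) (hb0 : b 0 = 1) (hc0 : c 0 = 1)
    (hbc : ∀ n : ℕ, b n + c n = (b 1 + c 1) * n) (h4 : 4 ∣ Fintype.card V) (i : V) :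
    f (triad b c univ {i} 1) + (b 1 + b 3 + c 1 + 1) =
      ∑ j ∈ univ.erase i, f (triad b c {i} {j} 1) := by
  rw [← hf.apply_triad_eq_sum hb0 hbc (mem_singleton_self i) (notMem_erase i univ)
    (univ_erase_nonempty h4 i), ← hf.apply_triad_add hfu hb0 hbc
    (ne_empty_of_mem (mem_univ i)) (singleton_ne_empty i) (univ_ne_singleton h4 i),
    triad_swap hbc {i} (univ.erase i), triad_symmDiff_left hbc (univ.erase i) {i},
    symmDiff_comm (univ.erase i), singleton_symmDiff_univ_erase, card_univ_cast h4,
    card_univ_erase_cast h4 i, card_singleton, Nat.cast_one, hc0]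
  congr 2
  grind

theorem IsOrthoAdditive.apply_triad_singleton_add_swap (hf : IsOrthoAdditive (Tc b c) f)
    (hfu : f Set.univ = 1) (hb0 : b 0 = 1) (hbc : ∀ n : ℕ, b n + c n = (b 1 + c 1) * n)
    {i j : V} (hij : i ≠ j) : f (triad b c {i} {j} 1) + f (triad b c {j} {i} 1) = c 2 := by
  rw [triad_swap hbc {i} {j}, card_singleton_symmDiff_singleton hij, card_singleton,
    card_singleton, Nat.cast_one, Nat.cast_ofNat, show b 1 + (c 2 + b 1 + 1) = 1 + c 2 by grind,
    hf.apply_triad_add hfu hb0 hbc (singleton_ne_empty j) (singleton_ne_empty i)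
      (by simpa using hij.symm)]
  grind

theorem IsOrthoAdditive.sum_apply_triad_univ_singleton_eq_zero
    (hf : IsOrthoAdditive (Tc b c) f) (hfu : f Set.univ = 1) (hb0 : b 0 = 1) (hc0 : c 0 = 1)
    (hbc : ∀ n : ℕ, b n + c n = (b 1 + c 1) * n) (h4 : 4 ∣ Fintype.card V) :
    ∑ i, f (triad b c univ {i} 1) = 0 := by
  have hN : Even (Fintype.card V) := even_iff_two_dvd.mpr (dvd_trans (by norm_num) h4)
  have hN₂ : Even ((Fintype.card V).choose 2) := by
    obtain ⟨m, hm⟩ := h4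
    rw [Nat.choose_two_right, hm, show 4 * m * (4 * m - 1) = 2 * (2 * (m * (4 * m - 1))) by ring,
      Nat.mul_div_cancel_left _ two_pos]
    exact even_two_mul _
  calc ∑ i, f (triad b c univ {i} 1)
      = ∑ i, (∑ j ∈ univ.erase i, f (triad b c {i} {j} 1) + (b 1 + b 3 + c 1 + 1)) :=
        sum_congr rfl fun i _ => by
          rw [← hf.apply_triad_univ_singleton_add hfu hb0 hc0 hbc h4 i,
            CharTwo.add_cancel_right]
    _ = (Fintype.card V).choose 2 • c 2 + Fintype.card V • (b 1 + b 3 + c 1 + 1) := by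
        rw [sum_add_distrib, sum_sum_erase_eq_choose_two_smul _ _ _ fun i _ j _ hij =>
          hf.apply_triad_singleton_add_swap hfu hb0 hbc hij, sum_const, card_univ]
    _ = 0 := by
        rw [nsmul_eq_mul, nsmul_eq_mul, ZMod.natCast_eq_zero_iff_even.mpr hN,
          ZMod.natCast_eq_zero_iff_even.mpr hN₂, zero_mul, zero_mul, add_zero]

end NoBivaluation

open NoBivaluation

/-- There is no bivaluation on the orthoalgebra `(𝒫^{T_c}(A_b), ⊕, ∅, A_b)`:
no map to the two-element Boolean effect algebra (identified with `ZMod 2`,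
where `x ⊕ y` is defined iff not both `x = 1` and `y = 1`, and then equals `x + y`). -/
theorem stmt15 {V : Type*} [Fintype V] [DecidableEq V]
    (h4 : 4 ∣ Fintype.card V) (b c : ZMod 4 → ZMod 2)
    (hb0 : b 0 = 1) (hc0 : c 0 = 1) (hbc2 : b 2 + c 2 = 0)
    (hbc13 : b 1 + c 1 + b 3 + c 3 = 0) :
    ¬ ∃ f : Set (AbGround V b) → ZMod 2,
      f ∅ = 0 ∧ f Set.univ = 1 ∧
      ∀ Q ∈ PTup (Tc (V := V) b c), ∀ Q₁ ∈ PTup (Tc (V := V) b c),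
        Q₁ ⊆ polar (Tc (V := V) b c) Q →
        (¬ (f Q = 1 ∧ f Q₁ = 1)) ∧
        f (polar (Tc (V := V) b c) (polar (Tc (V := V) b c) (Q ∪ Q₁))) =
          f Q + f Q₁ := by
  rintro ⟨f, hf0, hfu, hf⟩
  have hadd : IsOrthoAdditive (Tc b c) f := fun Q hQ Q₁ hQ₁ h => (hf Q hQ Q₁ hQ₁ h).2
  have hbc := add_natCast_eq_mul_of_parity hb0 hc0 hbc2 hbc13
  rcases isEmpty_or_nonempty V with hV | ⟨⟨z₀⟩⟩
  · have hA : (Set.univ : Set (AbGround V b)) = ∅ := Set.univ_eq_empty_iff.mpr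
      ⟨fun l => block_ne_empty b hb0 l l.1.1.eq_empty_of_isEmpty⟩
    exact zero_ne_one (hf0 ▸ hA ▸ hfu)
  · have h := hadd.sum_apply_triad_univ_singleton_eq_one hfu hb0 hbc h4 z₀
    rw [hadd.sum_apply_triad_univ_singleton_eq_zero hfu hb0 hc0 hbc h4] at h
    exact zero_ne_one h
end

section
/- Let V be a finite set and b, c : ZMod 4 → ZMod 2 with b(0) = 1 and b(2) + c(2) = 0. Let Ω ⊆ V be a nonempty subset of even cardinality. Then there do not exist functions σ_v ∈ L_b({v}) for each v ∈ Ω together with a function φ ∈ L_b(Ω) such that the |Ω| + 1 elements ({v}, σ_v), v ∈ Ω, and (Ω, φ) of A_b are pairwise in the relation T_c. -/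
open scoped symmDiff

/-! Each pairwise condition says `σ_v(w) + σ_w(v) = c(2) + 1`, so grouping the off-diagonal
sum `∑_{v ≠ w} σ_v(w)` into unordered pairs gives `C(|Ω|, 2) (c(2) + 1)`. Each mixed condition
determines `∑_{z ∈ Ω ∖ v} σ_v(z)` from `∑_{z ∈ Ω ∖ v} φ(z) = b(|Ω|) - φ(v)`; summing over
`v ∈ Ω`, with `|Ω|` even, the same off-diagonal sum equals `b(|Ω|)`. As
`C(|Ω|, 2) ≡ |Ω| / 2 (mod 2)`, this contradicts `b(0) = 1` when `4 ∣ |Ω|` and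
`b(2) + c(2) = 0` otherwise. -/

section

open Finset

variable {α : Type*} [DecidableEq α] {b c : ZMod 4 → ZMod 2}

theorem Finset.sum_sum_erase_eq_choose_two_nsmul {M : Type*} [AddCommMonoid M] (s : Finset α)
    (f : α → α → M) (k : M) (h : ∀ v ∈ s, ∀ w ∈ s, v ≠ w → f v w + f w v = k) :
    ∑ v ∈ s, ∑ w ∈ s.erase v, f v w = (#s).choose 2 • k := by
  induction s using Finset.induction_on with
  | empty => simp
  | insert a s ha ih =>
    have hne : ∀ v ∈ s, v ≠ a := fun v hv => ne_of_mem_of_not_mem hv ha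
    have hrow : ∀ v ∈ s,
        ∑ w ∈ (insert a s).erase v, f v w = f v a + ∑ w ∈ s.erase v, f v w := fun v hv => by
        rw [erase_insert_of_ne (hne v hv).symm, sum_insert fun h => ha (mem_of_mem_erase h)]
    have hpair : ∀ w ∈ s, f a w + f w a = k := fun w hw =>
      h a (mem_insert_self a s) w (mem_insert_of_mem hw) (hne w hw).symm
    rw [sum_insert ha, erase_insert ha, sum_congr rfl hrow, sum_add_distrib, ← add_assoc,
      ← sum_add_distrib, sum_congr rfl hpair, sum_const,
      ih fun v hv w hw => h v (mem_insert_of_mem hv) w (mem_insert_of_mem hw),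
      card_insert_of_notMem ha, Nat.choose_succ_succ', Nat.choose_one_right, add_nsmul, add_comm]

theorem Nat.choose_two_mul_add_self (m : ℕ) : (2 * m).choose 2 + m = 2 * (m * m) := by
  induction m with
  | zero => rfl
  | succ m ih =>
    rw [show 2 * (m + 1) = 2 * m + 1 + 1 by ring, Nat.choose_succ_succ' (2 * m + 1) 1,
      Nat.choose_succ_succ' (2 * m) 1, Nat.choose_one_right, Nat.choose_one_right]
    nlinarith

theorem ZMod.natCast_choose_two_add_self (m : ℕ) : (((m + m).choose 2 : ℕ) : ZMod 2) = m := by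
  have h := congrArg (Nat.cast : ℕ → ZMod 2) (Nat.choose_two_mul_add_self m)
  rw [← two_mul]
  push_cast at h
  rwa [show (2 : ZMod 2) = 0 from rfl, zero_mul, add_eq_zero_iff_eq_neg,
    ZMod.neg_eq_self_mod_two] at h

theorem ZMod.ne_iff_eq_add_one {x y : ZMod 2} : x ≠ y ↔ x = y + 1 := by
  revert x y; decide

theorem choose_two_nsmul_ne (hb0 : b 0 = 1) (hbc2 : b 2 + c 2 = 0)
    {n : ℕ} (hn : Even n) : n.choose 2 • (c 2 + 1) ≠ b n := by
  obtain ⟨m, rfl⟩ := hn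
  rw [nsmul_eq_mul, ZMod.natCast_choose_two_add_self]
  rcases Nat.even_or_odd' m with ⟨j, rfl | rfl⟩
  · have h4 : ((2 * j + 2 * j : ℕ) : ZMod 4) = 0 := by push_cast; ring_nf; reduce_mod_char
    have h2 : ((2 * j : ℕ) : ZMod 2) = 0 := by push_cast; reduce_mod_char
    rw [h4, h2, hb0, zero_mul]
    exact zero_ne_one
  · have h4 : ((2 * j + 1 + (2 * j + 1) : ℕ) : ZMod 4) = 2 := by
      push_cast; ring_nf; reduce_mod_char
    have h2 : ((2 * j + 1 : ℕ) : ZMod 2) = 1 := by push_cast; reduce_mod_char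
    rw [add_eq_zero_iff_eq_neg, ZMod.neg_eq_self_mod_two] at hbc2
    rw [h4, h2, one_mul, hbc2]
    exact add_ne_left.mpr one_ne_zero

theorem mem_Lb_singleton_iff {v : α} {σ : α → ZMod 2} : σ ∈ Lb b {v} ↔ σ v = b 1 := by
  simp [Lb]

theorem TcP_singleton_singleton_iff {v w : α} (hvw : v ≠ w) {σ τ : α → ZMod 2}
    (hσ : σ ∈ Lb b {v}) (hτ : τ ∈ Lb b {w}) :
    TcP c ({v}, σ) ({w}, τ) ↔ σ w + τ v = c 2 + 1 := by
  have hσv := mem_Lb_singleton_iff.1 hσ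
  have hτw := mem_Lb_singleton_iff.1 hτ
  simp only [TcP, singleton_inj, if_neg hvw]
  rw [Disjoint.symmDiff_eq_sup (disjoint_singleton.2 hvw), sup_eq_union, ← insert_eq,
    sum_pair hvw, card_pair hvw, ZMod.ne_iff_eq_add_one, hσv, hτw]
  grind

theorem TcP_singleton_iff_of_mem {v : α} {U : Finset α} (hv : v ∈ U) (hU : {v} ≠ U)
    {σ φ : α → ZMod 2} :
    TcP c ({v}, σ) (U, φ) ↔ ∑ z ∈ U.erase v, (σ z + φ z) = c (#U - 1 : ℕ) + 1 := by
  simp only [TcP, if_neg hU]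
  rw [symmDiff_of_le (singleton_subset_iff.2 hv), sdiff_singleton_eq_erase, card_erase_of_mem hv,
    ZMod.ne_iff_eq_add_one]

theorem choose_two_nsmul_eq_of_pairwise_TcP {Ω : Finset α}
    (heven : Even #Ω) {σ : α → α → ZMod 2} {φ : α → ZMod 2} (hσ : ∀ v ∈ Ω, σ v ∈ Lb b {v})
    (hφ : φ ∈ Lb b Ω) (hpair : ∀ v ∈ Ω, ∀ w ∈ Ω, v ≠ w → TcP c ({v}, σ v) ({w}, σ w))
    (hmix : ∀ v ∈ Ω, TcP c ({v}, σ v) (Ω, φ)) :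
    (#Ω).choose 2 • (c 2 + 1) = b #Ω := by
  replace hφ : ∑ z ∈ Ω, φ z = b #Ω := hφ
  have hΩ : ∀ v, {v} ≠ Ω := fun v h => by
    rw [← h, card_singleton] at heven
    exact Nat.not_even_one heven
  have hrow : ∀ v ∈ Ω, ∑ z ∈ Ω.erase v, σ v z = c (#Ω - 1 : ℕ) + 1 - (b #Ω - φ v) :=
      fun v hv => by
    rw [← hφ, ← sum_erase_eq_sub hv, ← (TcP_singleton_iff_of_mem hv (hΩ v)).1 (hmix v hv),
      sum_add_distrib, add_sub_cancel_right]
  calc (#Ω).choose 2 • (c 2 + 1) = ∑ v ∈ Ω, ∑ z ∈ Ω.erase v, σ v z :=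
        (sum_sum_erase_eq_choose_two_nsmul Ω σ _ fun v hv w hw hvw =>
          (TcP_singleton_singleton_iff hvw (hσ v hv) (hσ w hw)).1 (hpair v hv w hw hvw)).symm
    _ = ∑ v ∈ Ω, (c (#Ω - 1 : ℕ) + 1 - b #Ω + φ v) := sum_congr rfl fun v hv => by
      rw [hrow v hv, sub_sub_eq_add_sub, add_sub_right_comm]
    _ = b #Ω := by
      rw [sum_add_distrib, sum_const, nsmul_eq_mul, heven.natCast_zmod_two, zero_mul, zero_add,
        hφ]

end

theorem stmt17_general {V : Type*} [DecidableEq V]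
    (b c : ZMod 4 → ZMod 2) (hb0 : b 0 = 1) (hbc2 : b 2 + c 2 = 0)
    (Ω : Finset V) (heven : Even Ω.card) :
    ¬ ∃ (σ : V → (V → ZMod 2)) (φ : V → ZMod 2),
      (∀ v ∈ Ω, σ v ∈ Lb b {v}) ∧ φ ∈ Lb b Ω ∧
      (∀ v ∈ Ω, ∀ v₁ ∈ Ω, v ≠ v₁ → TcP c ({v}, σ v) ({v₁}, σ v₁)) ∧
      (∀ v ∈ Ω, TcP c ({v}, σ v) (Ω, φ)) := by
  rintro ⟨σ, φ, hσ, hφ, hpair, hmix⟩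
  exact choose_two_nsmul_ne hb0 hbc2 heven
    (choose_two_nsmul_eq_of_pairwise_TcP heven hσ hφ hpair hmix)

theorem stmt17 {V : Type*} [Fintype V] [DecidableEq V]
    (b c : ZMod 4 → ZMod 2) (hb0 : b 0 = 1) (hbc2 : b 2 + c 2 = 0)
    (Ω : Finset V) (hne : Ω.Nonempty) (heven : Even Ω.card) :
    ¬ ∃ (σ : V → (V → ZMod 2)) (φ : V → ZMod 2),
      (∀ v ∈ Ω, σ v ∈ Lb b {v}) ∧ φ ∈ Lb b Ω ∧
      (∀ v ∈ Ω, ∀ v₁ ∈ Ω, v ≠ v₁ → TcP c ({v}, σ v) ({v₁}, σ v₁)) ∧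
      (∀ v ∈ Ω, TcP c ({v}, σ v) (Ω, φ)) :=
  stmt17_general b c hb0 hbc2 Ω heven
end

section
/- Let A be a finite nonempty set and T a symmetric, irreflexive relation on A. Let H be a finite-dimensional complex inner product space, and suppose there exists an injective map μ from A to the set of one-dimensional subspaces of H such that for all x ≠ x₁ in A, (x, x₁) ∈ T if and only if μ(x) is orthogonal to μ(x₁). Suppose moreover that for every M maximal (with respect to inclusion) in 𝒫_T(A), the subspaces μ(y), y ∈ M, together span H. Then T is saturated: for every such maximal M and every B ⊆ M one has B^T = ((M ∖ B)^T)^T. -/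
/-!
Represent `T` by orthogonality: with `V S := ⨆ y ∈ S, μ y`, a point `z` lies in `S^T` exactly
when `μ z ⟂ V S`. For a maximal `M ∈ 𝒫_T(A)` and `B ⊆ M`, the spaces `V B` and `V (M \ B)` are
orthogonal and together span `H`, so `(V (M \ B))ᗮ = V B`. Hence `(M \ B)^T` consists of the
points whose line lies in `V B`, these lines span `V B` again, and so `((M \ B)^T)^T` and `B^T`
are both the set of points whose line is orthogonal to `V B`.
-/

namespace Submodule

variable {𝕜 E : Type*} [RCLike 𝕜] [NormedAddCommGroup E] [InnerProductSpace 𝕜 E]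

theorem IsOrtho.orthogonal_eq_of_sup_eq_top {U V : Submodule 𝕜 E} (h : U ⟂ V)
    (hsup : U ⊔ V = ⊤) : Vᗮ = U := by
  have := sup_inf_assoc_of_le V h
  rwa [hsup, top_inf_eq, inf_orthogonal_eq_bot, sup_bot_eq] at this

end Submodule

section OrthogonalityRepresentation

open Submodule

variable {α 𝕜 H : Type*} [RCLike 𝕜] [NormedAddCommGroup H] [InnerProductSpace 𝕜 H]
  {T : α → α → Prop} {μ : α → Submodule 𝕜 H}

theorem rel_iff_isOrtho_of_irrefl (hirr : IrreflRel T) (hne : ∀ x, μ x ≠ ⊥)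
    (horth : ∀ x x₁, x ≠ x₁ → (T x x₁ ↔ μ x ≤ (μ x₁)ᗮ)) (x y : α) :
    T x y ↔ μ x ⟂ μ y := by
  rcases eq_or_ne x y with rfl | hxy
  · simpa [hirr x] using hne x
  · exact horth x y hxy

variable (hT : ∀ x y, T x y ↔ μ x ⟂ μ y)
include hT

theorem mem_polar_iff_isOrtho_iSup (S : Set α) (z : α) :
    z ∈ polar T S ↔ (⨆ y ∈ S, μ y) ⟂ μ z := by
  simp only [polar, Set.mem_ofPred_eq, isOrtho_iSup_left, hT]

theorem isOrtho_iSup_of_mem_PTset {M : Set α} (hM : M ∈ PTset T) {B : Set α} (hB : B ⊆ M) :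
    (⨆ y ∈ B, μ y) ⟂ (⨆ y ∈ M \ B, μ y) := by
  refine isOrtho_iSup_left.mpr fun b => isOrtho_iSup_left.mpr fun hb =>
    isOrtho_iSup_right.mpr fun y => isOrtho_iSup_right.mpr fun hy => ?_
  exact (hT b y).mp (hM b (hB hb) y hy.1 fun h => hy.2 (h ▸ hb))

theorem polar_eq_polar_polar_of_orthogonal_eq {B C : Set α}
    (hBC : (⨆ y ∈ C, μ y)ᗮ = ⨆ y ∈ B, μ y) : polar T B = polar T (polar T C) := by
  have hmem : ∀ z, z ∈ polar T C ↔ μ z ≤ ⨆ y ∈ B, μ y := fun z => by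
    rw [mem_polar_iff_isOrtho_iSup hT, isOrtho_comm, isOrtho_iff_le, hBC]
  have hB : B ⊆ polar T C := fun b hb => (hmem b).mpr (le_biSup μ hb)
  have hspan : (⨆ y ∈ polar T C, μ y) = ⨆ y ∈ B, μ y :=
    le_antisymm (iSup₂_le fun z hz => (hmem z).mp hz) (biSup_mono hB)
  ext z
  rw [mem_polar_iff_isOrtho_iSup hT, mem_polar_iff_isOrtho_iSup hT, hspan]

end OrthogonalityRepresentation

theorem stmt18_general {α : Type*} (T : α → α → Prop)
    (hirr : IrreflRel T)
    {H : Type*} [NormedAddCommGroup H] [InnerProductSpace ℂ H]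
    (μ : α → Submodule ℂ H)
    (hdim : ∀ x, Module.finrank ℂ (μ x) = 1)
    (horth : ∀ x x₁, x ≠ x₁ → (T x x₁ ↔ μ x ≤ (μ x₁)ᗮ))
    (hspan : ∀ M : Set α, MaxPT T M → (⨆ y ∈ M, μ y) = ⊤) :
    SaturatedRel T := by
  intro M hM B hB
  have hne : ∀ x, μ x ≠ ⊥ := fun x h => by
    have := hdim x
    rw [h, finrank_bot] at this
    exact zero_ne_one this
  have hT := rel_iff_isOrtho_of_irrefl hirr hne horth
  have hortho := isOrtho_iSup_of_mem_PTset hT hM.1 hB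
  have hsup : (⨆ y ∈ B, μ y) ⊔ (⨆ y ∈ M \ B, μ y) = ⊤ := by
    rw [← iSup_union, Set.union_sdiff_cancel hB, hspan M hM]
  exact polar_eq_polar_polar_of_orthogonal_eq hT (hortho.orthogonal_eq_of_sup_eq_top hsup)

theorem stmt18 {α : Type*} [Fintype α] [Nonempty α] (T : α → α → Prop)
    (hsymm : SymmRel T) (hirr : IrreflRel T)
    {H : Type*} [NormedAddCommGroup H] [InnerProductSpace ℂ H]
    [FiniteDimensional ℂ H]
    (μ : α → Submodule ℂ H) (hinj : Function.Injective μ)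
    (hdim : ∀ x, Module.finrank ℂ (μ x) = 1)
    (horth : ∀ x x₁, x ≠ x₁ → (T x x₁ ↔ μ x ≤ (μ x₁)ᗮ))
    (hspan : ∀ M : Set α, MaxPT T M → (⨆ y ∈ M, μ y) = ⊤) :
    SaturatedRel T :=
  stmt18_general T hirr μ hdim horth hspan
end

section
/- Let V be a finite set with |V| = 4, and let b, c : ZMod 4 → ZMod 2 be given by b(0) = c(0) = 1 and b(i) = c(i) = 0 for i = 1, 2, 3. Then there exists an injective map μ from A_b to the set of one-dimensional subspaces of the 8-dimensional complex inner product space ℂ⁸ (EuclideanSpace ℂ (Fin 8)) such that for all x ≠ x₁ in A_b, (x, x₁) ∈ T_c if and only if μ(x) is orthogonal to μ(x₁). -/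
open scoped symmDiff

/-!
Identify `V` with `Fin 4`. The point `(U, φ)` is sent to a real stabilizer state of three qubits:
under the Klein correspondence `Λ²𝔽₂⁴ ≅ 𝔽₂⁶` (`e₀ ∧ eₖ ↦ Xₖ`, `eᵢ ∧ eⱼ ↦ Zₖ` for `{i, j, k} = {1, 2, 3}`)
the bivectors `U ∧ X` form a maximal commuting set of Pauli operators, and `φ` prescribes their
eigenvalues `± (-1)^{φ(X)}`. For `U ≠ U'` the two stabilizers share only the Pauli of `U ∧ U'`, so the
states are orthogonal exactly when their eigenvalues on it differ, which is the relation `T_c`; otherwise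
their overlap is `1/4`, so distinct points give distinct lines (these are the 120 root lines of `E₈`).
Encoding `U` and `φ` as 4-bit masks, both facts are checked by evaluation over all pairs.
-/

open scoped InnerProductSpace

section Relabel

variable {V W : Type*} (e : V ≃ W)

def relabelPair (p : Finset V × (V → ZMod 2)) : Finset W × (W → ZMod 2) :=
  (p.1.map e.toEmbedding, p.2 ∘ e.symm)

theorem relabelPair_injective : Function.Injective (relabelPair e) := by
  rintro ⟨U, φ⟩ ⟨U', φ'⟩ h
  simp only [relabelPair, Prod.mk.injEq, Finset.map_inj] at h
  exact Prod.ext h.1 (e.symm.surjective.injective_comp_right h.2)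

variable [DecidableEq V] [DecidableEq W]

theorem relabelPair_mem_Lb_iff (b : ZMod 4 → ZMod 2) (p : Finset V × (V → ZMod 2)) :
    (relabelPair e p).2 ∈ Lb b (relabelPair e p).1 ↔ p.2 ∈ Lb b p.1 := by
  simp only [relabelPair, Lb, Set.mem_ofPred_eq, Function.comp_apply, Finset.sum_map,
    Equiv.coe_toEmbedding, Equiv.symm_apply_apply, Finset.card_map]

theorem TcP_relabelPair (c : ZMod 4 → ZMod 2) (p q : Finset V × (V → ZMod 2)) :
    TcP c (relabelPair e p) (relabelPair e q) ↔ TcP c p q := by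
  have hsymm : p.1.map e.toEmbedding ∆ q.1.map e.toEmbedding = (p.1 ∆ q.1).map e.toEmbedding := by
    simp only [Finset.map_eq_image, Finset.image_symmDiff _ _ e.toEmbedding.injective]
  simp only [TcP, relabelPair, Finset.map_inj, hsymm, Function.comp_apply, Finset.sum_map,
    Equiv.coe_toEmbedding, Equiv.symm_apply_apply, Finset.card_map,
    (e.symm.surjective.injective_comp_right).ne_iff]

def AbGround.relabel (b : ZMod 4 → ZMod 2) (x : AbGround V b) : AbGround W b :=
  ⟨relabelPair e x.1, (relabelPair_mem_Lb_iff e b x.1).2 x.2⟩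

theorem AbGround.relabel_injective (b : ZMod 4 → ZMod 2) :
    Function.Injective (AbGround.relabel e b) :=
  fun _ _ h => Subtype.ext (relabelPair_injective e (congrArg Subtype.val h))

end Relabel

section Lines

variable {𝕜 E : Type*} [RCLike 𝕜] [NormedAddCommGroup E] [InnerProductSpace 𝕜 E]

theorem span_singleton_ne_of_norm_inner_lt {x y : E} (hx : x ≠ 0) (hy : y ≠ 0)
    (h : ‖⟪x, y⟫_𝕜‖ < ‖x‖ * ‖y‖) : (𝕜 ∙ x) ≠ (𝕜 ∙ y) := by
  intro hxy
  obtain ⟨r, rfl⟩ := Submodule.mem_span_singleton.1 (hxy ▸ Submodule.mem_span_singleton_self y)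
  exact h.ne ((norm_inner_eq_norm_iff hx hy).2 ⟨r, fun hr => hy (by simp [hr]), rfl⟩)

theorem span_singleton_le_orthogonal_iff {x y : E} :
    (𝕜 ∙ x) ≤ (𝕜 ∙ y)ᗮ ↔ ⟪x, y⟫_𝕜 = 0 := by
  rw [Submodule.span_singleton_le_iff_mem, Submodule.mem_orthogonal_singleton_iff_inner_right,
    inner_eq_zero_symm]

theorem exists_lines_of_vectors {ι : Type*} (R : ι → ι → Prop) (v : ι → E)
    (hv : ∀ i, v i ≠ 0) (hlt : ∀ i j, i ≠ j → ‖⟪v i, v j⟫_𝕜‖ < ‖v i‖ * ‖v j‖)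
    (hR : ∀ i j, i ≠ j → (R i j ↔ ⟪v i, v j⟫_𝕜 = 0)) :
    ∃ μ : ι → Submodule 𝕜 E, Function.Injective μ ∧ (∀ i, Module.finrank 𝕜 (μ i) = 1) ∧
      ∀ i j, i ≠ j → (R i j ↔ μ i ≤ (μ j)ᗮ) := by
  refine ⟨fun i => 𝕜 ∙ v i, fun i j h => ?_, fun i => finrank_span_singleton (hv i),
    fun i j hij => (hR i j hij).trans span_singleton_le_orthogonal_iff.symm⟩
  by_contra hij
  exact span_singleton_ne_of_norm_inner_lt (hv i) (hv j) (hlt i j hij) h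

end Lines

section IntVector

variable {n : ℕ}

def ofIntVector (v : Fin n → ℤ) : EuclideanSpace ℂ (Fin n) := WithLp.toLp 2 fun i => (v i : ℂ)

theorem inner_ofIntVector (v w : Fin n → ℤ) :
    ⟪ofIntVector v, ofIntVector w⟫_ℂ = ((v ⬝ᵥ w : ℤ) : ℂ) := by
  simp only [ofIntVector, PiLp.inner_apply, RCLike.inner_apply, map_intCast, dotProduct]
  push_cast
  exact Finset.sum_congr rfl fun _ _ => mul_comm _ _

theorem norm_ofIntVector_sq (v : Fin n → ℤ) : ‖ofIntVector v‖ ^ 2 = v ⬝ᵥ v := by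
  rw [norm_sq_eq_re_inner (𝕜 := ℂ), inner_ofIntVector, RCLike.intCast_re]

end IntVector

namespace FourBit

def ofFinset (U : Finset (Fin 4)) : ℕ := ∑ i ∈ U, 2 ^ (i : ℕ)

def ofFun (φ : Fin 4 → ZMod 2) : ℕ := ∑ i, (φ i).val * 2 ^ (i : ℕ)

def weight (x : ℕ) : ℕ := x % 2 + x / 2 % 2 + x / 4 % 2 + x / 8 % 2

theorem ofFinset_lt : ∀ U, ofFinset U < 16 := by decide

theorem ofFun_lt : ∀ φ, ofFun φ < 16 := by decide

theorem ofFinset_injective : Function.Injective ofFinset := by decide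

theorem ofFun_injective : Function.Injective ofFun := by decide

theorem ofFinset_symmDiff : ∀ U U', ofFinset (U ∆ U') = ofFinset U ^^^ ofFinset U' := by decide

theorem card_eq_weight : ∀ U, U.card = weight (ofFinset U) := by decide

theorem sum_eq_weight : ∀ U φ, ∑ z ∈ U, φ z = (weight (ofFinset U &&& ofFun φ) : ZMod 2) := by
  decide

def Valid (b : ZMod 4 → ZMod 2) (u f : ℕ) : Prop :=
  (weight (u &&& f) : ZMod 2) = b (weight u)

def Adj (c : ZMod 4 → ZMod 2) (u f u' f' : ℕ) : Prop :=
  if u = u' then f ≠ f'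
  else (weight ((u ^^^ u') &&& f) + weight ((u ^^^ u') &&& f') : ZMod 2) ≠ c (weight (u ^^^ u'))

instance (b : ZMod 4 → ZMod 2) (u f : ℕ) : Decidable (Valid b u f) := by
  unfold Valid; infer_instance

instance (c : ZMod 4 → ZMod 2) (u f u' f' : ℕ) : Decidable (Adj c u f u' f') := by
  unfold Adj; infer_instance

theorem mem_Lb_iff_valid (b : ZMod 4 → ZMod 2) (U : Finset (Fin 4)) (φ : Fin 4 → ZMod 2) :
    φ ∈ Lb b U ↔ Valid b (ofFinset U) (ofFun φ) := by
  rw [Lb, Set.mem_ofPred_eq, Valid, sum_eq_weight, card_eq_weight]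

theorem TcP_iff_adj (c : ZMod 4 → ZMod 2) (p q : Finset (Fin 4) × (Fin 4 → ZMod 2)) :
    TcP c p q ↔ Adj c (ofFinset p.1) (ofFun p.2) (ofFinset q.1) (ofFun q.2) := by
  simp only [TcP, Adj, ofFinset_injective.eq_iff, ofFun_injective.ne_iff, ← ofFinset_symmDiff,
    Finset.sum_add_distrib, sum_eq_weight, card_eq_weight]

/-- `pairProducts y = (y₁y₂, y₀y₂, y₀y₁)`, so that `cross` is the cross product on `𝔽₂³`. -/
def pairProducts (y : ℕ) : ℕ :=
  y / 2 % 2 * (y / 4 % 2) + 2 * (y % 2 * (y / 4 % 2)) + 4 * (y % 2 * (y / 2 % 2))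

def cross (a y : ℕ) : ℕ := pairProducts (a ^^^ y) ^^^ pairProducts a ^^^ pairProducts y

/-- The stabilizer state of `(U, φ)`, given by the masks `u` and `f`, in the basis of `(ℂ²)^{⊗3}`
indexed by subsets `y` of `{1, 2, 3}`, with `a`, `g` the restrictions of `U`, `φ` to `{1, 2, 3}`:
if `0 ∈ U` it is the graph state `(-1)^(a·π(y) + π(a)·y + g·y)`, `π = pairProducts`; otherwise it is
`±2` on the two `y` with `y × a = g`, with relative sign `(-1)^(φ 0)` (flipped when `a = {1, 2, 3}`). -/
def lineVector (u f : ℕ) (i : Fin 8) : ℤ :=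
  let a := u / 2
  let g := f / 2
  let y := (i : ℕ)
  if u % 2 = 1 then
    (-1) ^ weight ((a &&& pairProducts y) ^^^ (pairProducts a &&& y) ^^^ (g &&& y))
  else if cross y a = g then
    if y ^^^ a < y then 2 * (-1) ^ (f % 2 + if a = 7 then 1 else 0) else 2
  else 0

theorem dotProduct_lineVector_self : ∀ u < 16, ∀ f < 16, Valid (Pi.single 0 1) u f →
    lineVector u f ⬝ᵥ lineVector u f = 8 := by
  decide +kernel

set_option synthInstance.maxSize 4000 in
theorem dotProduct_lineVector : ∀ u < 16, ∀ f < 16, Valid (Pi.single 0 1) u f →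
    ∀ u' < 16, ∀ f' < 16, Valid (Pi.single 0 1) u' f' → (u, f) ≠ (u', f') →
      ((Adj (Pi.single 0 1) u f u' f' ↔ lineVector u f ⬝ᵥ lineVector u' f' = 0) ∧
        (lineVector u f ⬝ᵥ lineVector u' f') ^ 2 < 64) := by
  decide +kernel

end FourBit

open FourBit

def e8Vector (x : AbGround (Fin 4) (Pi.single 0 1)) : EuclideanSpace ℂ (Fin 8) :=
  ofIntVector (lineVector (ofFinset x.1.1) (ofFun x.1.2))

theorem norm_e8Vector_sq (x : AbGround (Fin 4) (Pi.single 0 1)) : ‖e8Vector x‖ ^ 2 = 8 := by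
  rw [e8Vector, norm_ofIntVector_sq, dotProduct_lineVector_self _ (ofFinset_lt _) _ (ofFun_lt _)
    ((mem_Lb_iff_valid _ _ _).1 x.2)]
  norm_num

theorem inner_e8Vector {x y : AbGround (Fin 4) (Pi.single 0 1)} (hxy : x ≠ y) :
    (Tc (Pi.single 0 1) (Pi.single 0 1) x y ↔ ⟪e8Vector x, e8Vector y⟫_ℂ = 0) ∧
      ‖⟪e8Vector x, e8Vector y⟫_ℂ‖ < ‖e8Vector x‖ * ‖e8Vector y‖ := by
  have hcode : (ofFinset x.1.1, ofFun x.1.2) ≠ (ofFinset y.1.1, ofFun y.1.2) := fun h =>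
    hxy (Subtype.ext (Prod.ext (ofFinset_injective (Prod.ext_iff.1 h).1)
      (ofFun_injective (Prod.ext_iff.1 h).2)))
  obtain ⟨hadj, hlt⟩ := dotProduct_lineVector _ (ofFinset_lt _) _ (ofFun_lt _)
    ((mem_Lb_iff_valid _ _ _).1 x.2) _ (ofFinset_lt _) _ (ofFun_lt _)
    ((mem_Lb_iff_valid _ _ _).1 y.2) hcode
  rw [e8Vector, e8Vector, inner_ofIntVector, Tc, TcP_iff_adj, hadj, Int.cast_eq_zero,
    Complex.norm_intCast]
  refine ⟨Iff.rfl, abs_lt_of_sq_lt_sq ?_ (by positivity)⟩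
  rw [mul_pow, ← e8Vector, ← e8Vector, norm_e8Vector_sq, norm_e8Vector_sq]
  exact_mod_cast hlt.trans_le (by norm_num)

theorem eq_pi_single_zero {b : ZMod 4 → ZMod 2} (h0 : b 0 = 1) (h1 : b 1 = 0) (h2 : b 2 = 0)
    (h3 : b 3 = 0) : b = Pi.single 0 1 := by
  funext i
  obtain rfl | rfl | rfl | rfl : i = 0 ∨ i = 1 ∨ i = 2 ∨ i = 3 := by revert i; decide
  all_goals simp only [Pi.single_apply, h0, h1, h2, h3]
  all_goals decide

theorem stmt19 {V : Type*} [Fintype V] [DecidableEq V]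
    (hcard : Fintype.card V = 4) (b c : ZMod 4 → ZMod 2)
    (hb0 : b 0 = 1) (hc0 : c 0 = 1)
    (hb1 : b 1 = 0) (hb2 : b 2 = 0) (hb3 : b 3 = 0)
    (hc1 : c 1 = 0) (hc2 : c 2 = 0) (hc3 : c 3 = 0) :
    ∃ μ : AbGround V b → Submodule ℂ (EuclideanSpace ℂ (Fin 8)),
      Function.Injective μ ∧
      (∀ x, Module.finrank ℂ (μ x) = 1) ∧
      (∀ x x₁ : AbGround V b, x ≠ x₁ → (Tc b c x x₁ ↔ μ x ≤ (μ x₁)ᗮ)) := by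
  obtain rfl := eq_pi_single_zero hb0 hb1 hb2 hb3
  obtain rfl := eq_pi_single_zero hc0 hc1 hc2 hc3
  obtain ⟨μ, hinj, hrank, horth⟩ := exists_lines_of_vectors _ e8Vector
    (fun x hx => by simpa [hx] using norm_e8Vector_sq x)
    (fun _ _ hxy => (inner_e8Vector hxy).2) (fun _ _ hxy => (inner_e8Vector hxy).1)
  set e := Fintype.equivFinOfCardEq hcard
  refine ⟨μ ∘ AbGround.relabel e _, hinj.comp (AbGround.relabel_injective e _),
    fun x => hrank _, fun x y hxy => ?_⟩
  rw [Tc, ← TcP_relabelPair e]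
  exact horth _ _ ((AbGround.relabel_injective e _).ne hxy)
end
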